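/- arXiv:2105.03913 — 6 statements merged into one kernel-verified Lean document; each statement's English description precedes it below -/
import Mathlib

section
/- Let G be a finite generalized dihedral group and let H be a nontrivial subgroup of G. Then H is a perfect code of G if and only if H is an (a,b)-regular set of G for every pair of integers a, b with 0 ≤ a ≤ |H|−1, 0 ≤ b ≤ |H|, and a even when |H| is odd. -/
open scoped Pointwise

/-- The Cayley graph of a group `G` with inverse-closed connection set `S`:
`x` and `y` are adjacent iff `x ≠ y` and `y * x⁻¹ ∈ S`. -/
def cayleyGraph {G : Type*} [Group G] (S : Set G) (hS : S = S⁻¹) : SimpleGraph G where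
  Adj x y := x ≠ y ∧ y * x⁻¹ ∈ S
  symm := by
    constructor
    rintro x y ⟨hne, hmem⟩
    refine ⟨hne.symm, ?_⟩
    rw [hS, Set.mem_inv]
    simpa using hmem
  loopless := by
    constructor
    rintro x ⟨hne, -⟩
    exact hne rfl

/-- `C` is an `(a,b)`-regular set in the graph `Γ`: `C` is a nonempty proper subset of the
vertex set, every vertex in `C` has exactly `a` neighbours in `C`, and every vertex outside
`C` has exactly `b` neighbours in `C`. -/
def IsRegularSetIn {V : Type*} (Γ : SimpleGraph V) (C : Set V) (a b : ℕ) : Prop :=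
  C.Nonempty ∧ C ≠ Set.univ ∧
    (∀ v ∈ C, {u | u ∈ C ∧ Γ.Adj v u}.ncard = a) ∧
    (∀ v ∉ C, {u | u ∈ C ∧ Γ.Adj v u}.ncard = b)

/-- `C` is an `(a,b)`-regular set of the group `G` if it is an `(a,b)`-regular set in some
Cayley graph of `G`.  A `(0,1)`-regular set of `G` is a perfect code of `G`, and a
`(1,1)`-regular set of `G` is a total perfect code of `G`. -/
def IsRegularSetOf {G : Type*} [Group G] (C : Set G) (a b : ℕ) : Prop :=
  ∃ (S : Set G) (hS : S = S⁻¹), (1 : G) ∉ S ∧ IsRegularSetIn (cayleyGraph S hS) C a b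
/-- `G` is a generalized dihedral group: there are an abelian subgroup `A` of `G` and an
element `y ∈ G` with `y² = e` and `y⁻¹xy = x⁻¹` for all `x ∈ A`, such that `G` is
generated by `A` and `y`. -/
def IsGeneralizedDihedral (G : Type*) [Group G] : Prop :=
  ∃ (A : Subgroup G) (y : G),
    (∀ a ∈ A, ∀ b ∈ A, a * b = b * a) ∧ y ^ 2 = 1 ∧
    (∀ x ∈ A, y⁻¹ * x * y = x⁻¹) ∧ Subgroup.closure ((A : Set G) ∪ {y}) = ⊤

/-!
Neighbours in `H` of a vertex `v` of `Cay(G, S)` correspond to the elements of `S ∩ Hv⁻¹`, so `H`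
is `(a, b)`-regular as soon as some inverse-closed `S ∌ 1` meets `H` in `a` elements and every
other right coset of `H` in `b` elements. The part inside `H` is an inverse-closed subset of
`H ∖ {1}`; an odd `a` needs an involution of `H`, which exists because `|H|` is then even.

A generalized dihedral group has an abelian subgroup `A` outside of which every element is an
involution. Choosing `g ∈ A` whenever `Hg` meets `A`, inversion maps `Hg` into `Hg ∪ Hg⁻¹`.
If `Hg = Hg⁻¹`, the coset is inverse-closed, and a perfect code meets it in a single element,
which must be an involution; this makes an odd `b` possible. Otherwise matching `x ∈ Hg` with
`x⁻¹` for `x ∈ A` and with `x g⁻²` for `x ∉ A` gives a bijection `Hg → Hg⁻¹` whose pairs are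
inverse-closed, and `b` of these pairs serve both cosets at once.
-/

open Finset

namespace Function.Involutive

variable {α : Type*} [DecidableEq α] {σ : α → α}

theorem exists_invariant_subset_card_eq (hσ : Involutive σ) (n : ℕ) {X : Finset α}
    (hX : ∀ x ∈ X, σ x ∈ X) (hn : n ≤ #X) (hpar : Even n ∨ ∃ x ∈ X, σ x = x) :
    ∃ Y ⊆ X, #Y = n ∧ ∀ y ∈ Y, σ y ∈ Y := by
  induction n using Nat.strong_induction_on generalizing X with
  | _ n ih =>
  have remove_orbit : ∀ x ∈ X, #{x, σ x} ≤ n → Even (n - #{x, σ x}) →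
      ∃ Y ⊆ X, #Y = n ∧ ∀ y ∈ Y, σ y ∈ Y := by
    intro x hx hOn hpar'
    set O : Finset α := {x, σ x}
    have hOX : O ⊆ X := by simp [O, insert_subset_iff, hx, hX x hx]
    have hOpos : 0 < #O := card_pos.2 ⟨x, by simp [O]⟩
    have hrest : ∀ y ∈ X \ O, σ y ∈ X \ O := by
      intro y hy
      simp only [O, mem_sdiff, mem_insert, mem_singleton, not_or] at hy ⊢
      refine ⟨hX y hy.1, fun h => hy.2.2 ?_, fun h => hy.2.1 (hσ.injective h)⟩
      rw [← h, hσ]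
    obtain ⟨Y, hYX, hYn, hY⟩ := ih (n - #O) (by omega) hrest
      (by rw [card_sdiff_of_subset hOX]; omega) (Or.inl hpar')
    refine ⟨O ∪ Y, union_subset hOX (hYX.trans sdiff_subset), ?_, ?_⟩
    · rw [card_union_of_disjoint (disjoint_of_subset_right hYX disjoint_sdiff), hYn]
      omega
    · simp only [O, mem_union, mem_insert, mem_singleton]
      rintro y ((rfl | rfl) | hy)
      · exact Or.inl (Or.inr rfl)
      · exact Or.inl (Or.inl (hσ x))
      · exact Or.inr (hY y hy)
  rcases Nat.even_or_odd n with heven | hodd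
  · by_cases hfix : ∀ x ∈ X, σ x = x
    · obtain ⟨Y, hYX, hYn⟩ := exists_subset_card_eq hn
      exact ⟨Y, hYX, hYn, fun y hy => (hfix y (hYX hy)).symm ▸ hy⟩
    push Not at hfix
    obtain ⟨x, hx, hσx⟩ := hfix
    rcases n.eq_zero_or_pos with rfl | hpos
    · exact ⟨∅, empty_subset _, rfl, by simp⟩
    have hO : #{x, σ x} = 2 := card_pair hσx.symm
    obtain ⟨k, hk⟩ := heven
    exact remove_orbit x hx (by omega) (by rw [hO]; exact ⟨k - 1, by omega⟩)
  · obtain ⟨x, hx, hσx⟩ := hpar.resolve_left (Nat.not_even_iff_odd.2 hodd)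
    have hO : #{x, σ x} = 1 := by rw [hσx, pair_eq_singleton, card_singleton]
    obtain ⟨k, hk⟩ := hodd
    exact remove_orbit x hx (by omega) (by rw [hO]; exact ⟨k, by omega⟩)

end Function.Involutive

namespace Subgroup

variable {G : Type*} [Group G] [Fintype G] (H : Subgroup G) [DecidablePred (· ∈ H)]

def rightCosetFinset (g : G) : Finset G := {x | x * g⁻¹ ∈ H}

variable {H}

@[simp]
theorem mem_rightCosetFinset {g x : G} : x ∈ H.rightCosetFinset g ↔ x * g⁻¹ ∈ H := by
  simp [rightCosetFinset]

theorem mem_rightCosetFinset_self (g : G) : g ∈ H.rightCosetFinset g := by simp [H.one_mem]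

theorem rightCosetFinset_eq_of_mem {g x : G} (hx : x ∈ H.rightCosetFinset g) :
    H.rightCosetFinset x = H.rightCosetFinset g := by
  rw [mem_rightCosetFinset] at hx
  ext y
  simp only [mem_rightCosetFinset]
  constructor
  · intro hy; simpa [mul_assoc] using H.mul_mem hy hx
  · intro hy; simpa [mul_assoc] using H.mul_mem hy (H.inv_mem hx)

theorem rightCosetFinset_inv_of_mul_self_mem {g : G} (hg : g * g ∈ H) :
    H.rightCosetFinset g⁻¹ = H.rightCosetFinset g :=
  rightCosetFinset_eq_of_mem (by simpa [mul_inv_rev] using H.inv_mem hg)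

theorem card_rightCosetFinset (g : G) : #(H.rightCosetFinset g) = Nat.card H := by
  have : H.rightCosetFinset g = ({x | x ∈ H} : Finset G).map (mulRightEmbedding g) := by
    ext x
    simp only [mem_rightCosetFinset, Finset.mem_map, Finset.mem_filter, mem_univ, true_and,
      mulRightEmbedding_apply]
    exact ⟨fun hx => ⟨x * g⁻¹, hx, by group⟩, by rintro ⟨h, hh, rfl⟩; simpa using hh⟩
  rw [this, card_map, Nat.card_eq_fintype_card, ← Fintype.card_subtype]

theorem exists_mem_rightCosetFinset_mem_of_meets (A : Subgroup G) (g₀ : G) :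
    ∃ g ∈ H.rightCosetFinset g₀, ∀ x ∈ H.rightCosetFinset g, x ∈ A → g ∈ A := by
  by_cases hmeet : ∃ x ∈ H.rightCosetFinset g₀, x ∈ A
  · obtain ⟨x, hx, hxA⟩ := hmeet
    exact ⟨x, hx, fun _ _ _ => hxA⟩
  · exact ⟨g₀, mem_rightCosetFinset_self g₀, fun x hx hxA => (hmeet ⟨x, hx, hxA⟩).elim⟩

theorem exists_inv_closed_subset_card_eq [DecidableEq G] {a : ℕ} (ha : a ≤ Nat.card H - 1)
    (hpar : Odd (Nat.card H) → Even a) :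
    ∃ S : Finset G, (∀ s ∈ S, s ∈ H) ∧ 1 ∉ S ∧ (∀ s ∈ S, s⁻¹ ∈ S) ∧ #S = a := by
  set X := (H.rightCosetFinset 1).erase 1
  have hX : ∀ x ∈ X, x⁻¹ ∈ X := by
    intro x hx
    simp only [X, Finset.mem_erase, mem_rightCosetFinset, inv_one, mul_one] at hx ⊢
    exact ⟨inv_ne_one.2 hx.1, H.inv_mem hx.2⟩
  have hXcard : #X = Nat.card H - 1 := by
    rw [card_erase_of_mem (mem_rightCosetFinset_self 1), card_rightCosetFinset]
  have hfix : Even a ∨ ∃ x ∈ X, x⁻¹ = x := by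
    refine or_iff_not_imp_left.2 fun hodd => ?_
    obtain ⟨t, ht⟩ := exists_prime_orderOf_dvd_card' 2
      (Nat.not_odd_iff_even.1 (mt hpar hodd)).two_dvd
    have ht' : orderOf (t : G) = 2 := by rwa [orderOf_coe]
    refine ⟨t, ?_, inv_eq_self_of_orderOf_eq_two ht'⟩
    simp only [X, Finset.mem_erase, mem_rightCosetFinset, inv_one, mul_one]
    exact ⟨fun h => by simp [h] at ht', t.2⟩
  obtain ⟨S, hSX, hScard, hSinv⟩ :=
    inv_involutive.exists_invariant_subset_card_eq a hX (hXcard ▸ ha) hfix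
  refine ⟨S, fun s hs => ?_, fun h => ?_, hSinv, hScard⟩
  · simpa using (Finset.mem_erase.1 (hSX hs)).2
  · simpa [X] using hSX h

end Subgroup

section CayleyGraph

variable {G : Type*} [Group G]

theorem IsRegularSetOf.ne_univ {C : Set G} {a b : ℕ} (hC : IsRegularSetOf C a b) :
    C ≠ Set.univ := by
  obtain ⟨-, -, -, -, hC, -⟩ := hC
  exact hC

theorem ncard_inter_cayleyGraph_adj (H : Subgroup G) {S : Set G} (hS : S = S⁻¹)
    (hS1 : (1 : G) ∉ S) (v : G) :
    {u | u ∈ (H : Set G) ∧ (cayleyGraph S hS).Adj v u}.ncard = (S ∩ {s | s * v ∈ H}).ncard := by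
  have : {u | u ∈ (H : Set G) ∧ (cayleyGraph S hS).Adj v u} =
      (· * v) '' (S ∩ {s | s * v ∈ H}) := by
    ext u
    simp only [cayleyGraph, Set.mem_ofPred_eq, Set.mem_image, Set.mem_inter_iff, SetLike.mem_coe]
    constructor
    · rintro ⟨huH, -, hu⟩
      exact ⟨u * v⁻¹, ⟨hu, by simpa using huH⟩, by group⟩
    · rintro ⟨s, ⟨hs, hsv⟩, rfl⟩
      refine ⟨hsv, fun h => hS1 ?_, by simpa using hs⟩
      rwa [← mul_eq_right.1 h.symm]
  rw [this, Set.ncard_image_of_injective _ (mul_left_injective v)]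

theorem exists_inv_eq_self_of_ncard_inter_eq_one {S T : Set G} (hS : S = S⁻¹) (hT : T = T⁻¹)
    (h : (S ∩ T).ncard = 1) : ∃ x ∈ T, x⁻¹ = x := by
  obtain ⟨x, hx⟩ := Set.ncard_eq_one.1 h
  have hinv : (S ∩ T)⁻¹ = S ∩ T := by rw [Set.inter_inv, ← hS, ← hT]
  rw [hx, Set.inv_singleton, Set.singleton_eq_singleton_iff] at hinv
  exact ⟨x, (hx ▸ Set.mem_singleton x : x ∈ S ∩ T).2, hinv⟩

variable [Fintype G] {H : Subgroup G} [DecidablePred (· ∈ H)]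

theorem IsRegularSetOf.exists_inv_eq_self_of_zero_one (hH : IsRegularSetOf (H : Set G) 0 1)
    {g : G} (hg : g ∉ H) (hinv : ∀ x ∈ H.rightCosetFinset g, x⁻¹ ∈ H.rightCosetFinset g) :
    ∃ x ∈ H.rightCosetFinset g, x⁻¹ = x := by
  obtain ⟨S, hS, hS1, -, -, -, hout⟩ := hH
  have hcount := hout g⁻¹ (by simpa using hg)
  rw [ncard_inter_cayleyGraph_adj H hS hS1] at hcount
  refine exists_inv_eq_self_of_ncard_inter_eq_one hS ?_ (T := ↑(H.rightCosetFinset g)) ?_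
  · ext x
    simp only [Set.mem_inv, mem_coe]
    exact ⟨hinv x, fun hx => by simpa using hinv _ hx⟩
  · convert hcount using 3
    ext x
    simp

theorem isRegularSetOf_subgroup_of_finset_union [DecidableEq G] {a b : ℕ}
    (hH : (H : Set G) ≠ Set.univ) {Sa Sb : Finset G} (hSa : ∀ s ∈ Sa, s ∈ H) (hSa1 : 1 ∉ Sa)
    (hSainv : ∀ s ∈ Sa, s⁻¹ ∈ Sa) (hSacard : #Sa = a) (hSb : ∀ s ∈ Sb, s ∉ H)
    (hSbinv : ∀ s ∈ Sb, s⁻¹ ∈ Sb) (hSbcard : ∀ g ∉ H, #(Sb ∩ H.rightCosetFinset g) = b) :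
    IsRegularSetOf (H : Set G) a b := by
  set S : Finset G := Sa ∪ Sb
  have hSinv : ∀ s ∈ S, s⁻¹ ∈ S := by
    simp only [S, mem_union]
    rintro s (hs | hs)
    exacts [Or.inl (hSainv s hs), Or.inr (hSbinv s hs)]
  have hS : (S : Set G) = (S : Set G)⁻¹ := by
    ext s
    simp only [Set.mem_inv, mem_coe]
    exact ⟨fun hs => hSinv s hs, fun hs => by simpa using hSinv _ hs⟩
  have hS1 : (1 : G) ∉ (S : Set G) := by
    simp only [S, coe_union, Set.mem_union, mem_coe, not_or]
    exact ⟨hSa1, fun h => hSb 1 h H.one_mem⟩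
  have hcount : ∀ v, {u | u ∈ (H : Set G) ∧ (cayleyGraph (S : Set G) hS).Adj v u}.ncard =
      #(S.filter (· * v ∈ H)) := by
    intro v
    rw [ncard_inter_cayleyGraph_adj H hS hS1, ← Set.ncard_coe_finset]
    congr 1
    ext
    simp
  refine ⟨S, hS, hS1, ⟨1, H.one_mem⟩, hH, fun v hv => ?_, fun v hv => ?_⟩
  · rw [hcount, filter_union, filter_true_of_mem fun s hs => H.mul_mem (hSa s hs) hv,
      filter_false_of_mem fun s hs hsv =>
        hSb s hs (by simpa using H.mul_mem hsv (H.inv_mem hv)),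
      union_empty, hSacard]
  · rw [hcount, filter_union,
      filter_false_of_mem fun s hs hsv =>
        hv (by simpa using H.mul_mem (H.inv_mem (hSa s hs)) hsv),
      empty_union, ← hSbcard v⁻¹ (by simpa using hv)]
    congr 1
    ext
    simp

end CayleyGraph

section CosetBlocks

open Subgroup

variable {G : Type*} [Group G] [Fintype G] [DecidableEq G] {H : Subgroup G}
  [DecidablePred (· ∈ H)] {b : ℕ}

theorem rightCosetFinset_subset_sdiff {V W : Finset G}
    (hV : ∀ v ∈ V, H.rightCosetFinset v ⊆ V) (hW : ∀ w ∈ W, H.rightCosetFinset w ⊆ W)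
    {v : G} (hv : v ∈ V \ W) : H.rightCosetFinset v ⊆ V \ W := by
  rw [mem_sdiff] at hv
  intro x hx
  refine mem_sdiff.2 ⟨hV v hv.1 hx, fun hxW => hv.2 (hW x hxW ?_)⟩
  rw [rightCosetFinset_eq_of_mem hx]
  exact mem_rightCosetFinset_self v

variable (H) in
/-- The part of a connection set lying over the pair of right cosets `Hg`, `Hg⁻¹`. -/
structure IsCosetBlock (b : ℕ) (g : G) (C : Finset G) : Prop where
  inv_mem_union : ∀ x ∈ H.rightCosetFinset g ∪ H.rightCosetFinset g⁻¹,
    x⁻¹ ∈ H.rightCosetFinset g ∪ H.rightCosetFinset g⁻¹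
  subset : C ⊆ H.rightCosetFinset g ∪ H.rightCosetFinset g⁻¹
  inv_mem : ∀ x ∈ C, x⁻¹ ∈ C
  card_inter : #(C ∩ H.rightCosetFinset g) = b
  card_inter_inv : #(C ∩ H.rightCosetFinset g⁻¹) = b

theorem exists_inv_closed_card_inter_rightCosetFinset
    (hblock : ∀ g ∉ H, ∃ g' ∈ H.rightCosetFinset g, ∃ C, IsCosetBlock H b g' C)
    (V : Finset G) (hVsat : ∀ v ∈ V, H.rightCosetFinset v ⊆ V) (hVinv : ∀ v ∈ V, v⁻¹ ∈ V)
    (hVH : ∀ v ∈ V, v ∉ H) :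
    ∃ S ⊆ V, (∀ s ∈ S, s⁻¹ ∈ S) ∧ ∀ v ∈ V, #(S ∩ H.rightCosetFinset v) = b := by
  induction V using Finset.strongInduction with
  | H V ih =>
  obtain rfl | ⟨v, hv⟩ := V.eq_empty_or_nonempty
  · exact ⟨∅, by simp, by simp, by simp⟩
  obtain ⟨g, hgv, C, hC⟩ := hblock v (hVH v hv)
  set W := H.rightCosetFinset g ∪ H.rightCosetFinset g⁻¹
  have hgV : g ∈ V := hVsat v hv hgv
  have hWV : W ⊆ V := union_subset (hVsat g hgV) (hVsat g⁻¹ (hVinv g hgV))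
  have hWsat : ∀ w ∈ W, H.rightCosetFinset w ⊆ W := by
    intro w hw
    rcases mem_union.1 hw with hw | hw <;> rw [rightCosetFinset_eq_of_mem hw]
    exacts [subset_union_left, subset_union_right]
  have hgW : g ∈ W := mem_union_left _ (mem_rightCosetFinset_self g)
  obtain ⟨S', hS'V, hS'inv, hS'card⟩ := ih (V \ W) (sdiff_ssubset hWV ⟨g, hgW⟩)
    (fun v hv => rightCosetFinset_subset_sdiff hVsat hWsat hv)
    (fun v hv => by
      rw [mem_sdiff] at hv ⊢
      exact ⟨hVinv v hv.1, fun h => hv.2 (inv_inv v ▸ hC.inv_mem_union _ h)⟩)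
    (fun v hv => hVH v (mem_sdiff.1 hv).1)
  refine ⟨C ∪ S', union_subset (hC.subset.trans hWV) (hS'V.trans sdiff_subset), ?_,
    fun w hw => ?_⟩
  · simp only [mem_union]
    rintro s (hs | hs)
    exacts [Or.inl (hC.inv_mem s hs), Or.inr (hS'inv s hs)]
  rw [union_inter_distrib_right]
  by_cases hwW : w ∈ W
  · have hS'w : S' ∩ H.rightCosetFinset w = ∅ := disjoint_iff_inter_eq_empty.1 <|
      disjoint_of_subset_left hS'V (disjoint_of_subset_right (hWsat w hwW) sdiff_disjoint)
    rw [hS'w, union_empty]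
    rcases mem_union.1 hwW with hw' | hw' <;> rw [rightCosetFinset_eq_of_mem hw']
    exacts [hC.card_inter, hC.card_inter_inv]
  · have hw' : w ∈ V \ W := mem_sdiff.2 ⟨hw, hwW⟩
    have hCw : C ∩ H.rightCosetFinset w = ∅ := disjoint_iff_inter_eq_empty.1 <|
      disjoint_of_subset_left hC.subset
        (disjoint_of_subset_right (rightCosetFinset_subset_sdiff hVsat hWsat hw') disjoint_sdiff)
    rw [hCw, empty_union]
    exact hS'card w hw'

theorem exists_isCosetBlock_of_inv_mem (hb : b ≤ Nat.card H) {g : G}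
    (hinv : ∀ x ∈ H.rightCosetFinset g, x⁻¹ ∈ H.rightCosetFinset g)
    (hpar : Even b ∨ ∃ x ∈ H.rightCosetFinset g, x⁻¹ = x) :
    ∃ C, IsCosetBlock H b g C := by
  have hgg : g * g ∈ H := by
    simpa [mul_inv_rev] using
      H.inv_mem (mem_rightCosetFinset.1 (hinv g (mem_rightCosetFinset_self g)))
  obtain ⟨C, hCg, hCcard, hCinv⟩ := inv_involutive.exists_invariant_subset_card_eq b hinv
    (by rwa [card_rightCosetFinset]) hpar
  have hrc := rightCosetFinset_inv_of_mul_self_mem hgg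
  have hC : C ∩ H.rightCosetFinset g = C := inter_eq_left.2 hCg
  refine ⟨C, ⟨?_, ?_, hCinv, ?_, ?_⟩⟩ <;> simp only [hrc, union_self, hC, hCcard]
  exacts [hinv, hCg]

theorem exists_isCosetBlock_of_pairing (hb : b ≤ Nat.card H) {g : G} (hgg : g * g ∉ H)
    (ψ : G → G) (hψinj : Set.InjOn ψ (H.rightCosetFinset g))
    (hψmem : ∀ x ∈ H.rightCosetFinset g, ψ x ∈ H.rightCosetFinset g⁻¹)
    (hψinv : ∀ x ∈ H.rightCosetFinset g, ∀ y ∈ ({x, ψ x} : Finset G),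
      y⁻¹ ∈ ({x, ψ x} : Finset G)) :
    ∃ C, IsCosetBlock H b g C := by
  set K := H.rightCosetFinset g
  set K' := H.rightCosetFinset g⁻¹
  have hdisj : Disjoint K K' := by
    refine disjoint_left.2 fun x hx hx' => hgg ?_
    simpa [mul_assoc] using H.mul_mem (H.inv_mem (mem_rightCosetFinset.1 hx))
      (mem_rightCosetFinset.1 hx')
  have himage : ∀ E ⊆ K, E.image ψ ⊆ K' := fun E hE y hy => by
    obtain ⟨x, hx, rfl⟩ := mem_image.1 hy
    exact hψmem x (hE hx)
  have hclosed : ∀ E ⊆ K, ∀ y ∈ E ∪ E.image ψ, y⁻¹ ∈ E ∪ E.image ψ := by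
    intro E hE y hy
    obtain ⟨x, hx, hxy⟩ : ∃ x ∈ E, y ∈ ({x, ψ x} : Finset G) := by
      rcases mem_union.1 hy with hy | hy
      · exact ⟨y, hy, by simp⟩
      · obtain ⟨x, hx, rfl⟩ := mem_image.1 hy
        exact ⟨x, hx, by simp⟩
    have := hψinv x (hE hx) y hxy
    simp only [mem_insert, mem_singleton] at this
    rcases this with h | h <;> rw [h]
    exacts [mem_union_left _ hx, mem_union_right _ (mem_image_of_mem ψ hx)]
  have hcard : ∀ E ⊆ K, #(E.image ψ) = #E := fun E hE =>
    card_image_of_injOn (hψinj.mono (by simpa using hE))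
  have hK' : K.image ψ = K' := eq_of_subset_of_card_le (himage K le_rfl) (by
    rw [hcard K le_rfl, card_rightCosetFinset, card_rightCosetFinset])
  obtain ⟨E, hEK, hEcard⟩ := exists_subset_card_eq (s := K) (n := b)
    (by rwa [card_rightCosetFinset])
  refine ⟨E ∪ E.image ψ, ⟨by simpa only [hK'] using hclosed K le_rfl,
    union_subset_union hEK (himage E hEK), hclosed E hEK, ?_, ?_⟩⟩
  · rw [union_inter_distrib_right, inter_eq_left.2 hEK,
      disjoint_iff_inter_eq_empty.1 (hdisj.mono_right (himage E hEK)).symm, union_empty, hEcard]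
  · rw [union_inter_distrib_right, inter_eq_left.2 (himage E hEK),
      disjoint_iff_inter_eq_empty.1 (hdisj.mono_left hEK), empty_union, hcard E hEK, hEcard]

end CosetBlocks

theorem IsGeneralizedDihedral.exists_commute_inv_eq_self {G : Type*} [Group G]
    (hG : IsGeneralizedDihedral G) :
    ∃ A : Subgroup G, (∀ a ∈ A, ∀ b ∈ A, a * b = b * a) ∧ ∀ g ∉ A, g⁻¹ = g := by
  obtain ⟨A, y, hA, hy, hyA, hgen⟩ := hG
  have hyy : y * y = 1 := by rw [← sq, hy]
  have hcover : ∀ g : G, g ∈ A ∨ g * y ∈ A := by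
    intro g
    induction (hgen ▸ Subgroup.mem_top g : g ∈ Subgroup.closure ((A : Set G) ∪ {y}))
      using Subgroup.closure_induction with
    | mem x hx =>
      rcases hx with hx | rfl
      exacts [Or.inl hx, Or.inr (hyy ▸ A.one_mem)]
    | one => exact Or.inl A.one_mem
    | mul x z _ _ hx hz =>
      rcases hx with hx | hx <;> rcases hz with hz | hz
      · exact Or.inl (A.mul_mem hx hz)
      · exact Or.inr (by simpa [mul_assoc] using A.mul_mem hx hz)
      · refine Or.inr ?_
        have : x * z * y = x * y * (y⁻¹ * z * y) := by group
        rw [this, hyA z hz]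
        exact A.mul_mem hx (A.inv_mem hz)
      · refine Or.inl ?_
        have : x * z = x * y * (y⁻¹ * (z * y) * y) * (y * y)⁻¹ := by group
        rw [this, hyA _ hz, hyy, inv_one, mul_one]
        exact A.mul_mem hx (A.inv_mem hz)
    | inv x _ hx =>
      rcases hx with hx | hx
      · exact Or.inl (A.inv_mem hx)
      · refine Or.inr ?_
        have : x⁻¹ * y = y * y * (y⁻¹ * (x * y) * y)⁻¹ := by group
        rw [this, hyA _ hx, inv_inv, hyy, one_mul]
        exact hx
  refine ⟨A, hA, fun g hg => inv_eq_of_mul_eq_one_left ?_⟩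
  -- `g = a * y` with `a ∈ A`, and `y` inverts `a`.
  have hgy := (hcover g).resolve_left hg
  calc g * g = g * y * (y⁻¹ * (g * y) * y) * (y * y)⁻¹ := by group
    _ = 1 := by rw [hyA _ hgy, hyy, inv_one, mul_one, mul_inv_cancel]

section GeneralizedDihedral

open Subgroup

variable {G : Type*} [Group G] [Fintype G] [DecidableEq G] {H A : Subgroup G}
  [DecidablePred (· ∈ H)] [DecidablePred (· ∈ A)] {b : ℕ}

theorem exists_isCosetBlock_of_mem_of_mul_self_notMem (hAc : ∀ g ∉ A, g⁻¹ = g)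
    (hb : b ≤ Nat.card H) {g : G} (hgA : g ∈ A) (hgg : g * g ∉ H)
    (hinvA : ∀ x ∈ H.rightCosetFinset g, x ∈ A → x⁻¹ ∈ H.rightCosetFinset g⁻¹) :
    ∃ C, IsCosetBlock H b g C := by
  have hgg' : g * g ∈ A := A.mul_mem hgA hgA
  refine exists_isCosetBlock_of_pairing hb hgg
    (fun x => if x ∈ A then x⁻¹ else x * g⁻¹ * g⁻¹) ?_ ?_ ?_
  · intro x _ z _ hxz
    by_cases hxA : x ∈ A <;> by_cases hzA : z ∈ A <;>
      simp only [hxA, hzA, if_true, if_false] at hxz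
    · exact inv_injective hxz
    · refine absurd ?_ hzA
      rw [show z = x⁻¹ * (g * g) by rw [hxz]; group]
      exact A.mul_mem (A.inv_mem hxA) hgg'
    · refine absurd ?_ hxA
      rw [show x = z⁻¹ * (g * g) by rw [← hxz]; group]
      exact A.mul_mem (A.inv_mem hzA) hgg'
    · simpa using hxz
  · intro x hx
    by_cases hxA : x ∈ A
    · simpa [hxA] using hinvA x hx hxA
    · simpa [hxA, mul_assoc] using mem_rightCosetFinset.1 hx
  · intro x _ y hy
    simp only [mem_insert, mem_singleton] at hy ⊢
    by_cases hxA : x ∈ A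
    · simp only [hxA, if_true] at hy ⊢
      rcases hy with rfl | rfl <;> simp
    · have hψA : x * g⁻¹ * g⁻¹ ∉ A := fun h => hxA (by
        rw [show x = x * g⁻¹ * g⁻¹ * (g * g) by group]; exact A.mul_mem h hgg')
      simp only [hxA, if_false] at hy ⊢
      rcases hy with rfl | rfl
      exacts [Or.inl (hAc _ hxA), Or.inr (hAc _ hψA)]

theorem exists_isCosetBlock_of_commute_inv_eq_self
    (hA : ∀ a ∈ A, ∀ b ∈ A, a * b = b * a) (hAc : ∀ g ∉ A, g⁻¹ = g)
    (hinvol : ∀ g ∉ H, (∀ x ∈ H.rightCosetFinset g, x⁻¹ ∈ H.rightCosetFinset g) →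
      ∃ x ∈ H.rightCosetFinset g, x⁻¹ = x)
    (hb : b ≤ Nat.card H) {g₀ : G} (hg₀ : g₀ ∉ H) :
    ∃ g ∈ H.rightCosetFinset g₀, ∃ C, IsCosetBlock H b g C := by
  obtain ⟨g, hg, hgood⟩ := H.exists_mem_rightCosetFinset_mem_of_meets A g₀
  refine ⟨g, hg, ?_⟩
  have hgH : g ∉ H := fun h =>
    hg₀ (by simpa using H.mul_mem (H.inv_mem (mem_rightCosetFinset.1 hg)) h)
  have hinvA : ∀ x ∈ H.rightCosetFinset g, x ∈ A → x⁻¹ ∈ H.rightCosetFinset g⁻¹ := by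
    intro x hx hxA
    rw [mem_rightCosetFinset, inv_inv, hA _ (A.inv_mem hxA) _ (hgood x hx hxA)]
    simpa using H.inv_mem (mem_rightCosetFinset.1 hx)
  by_cases hgg : g * g ∈ H
  · have hinv : ∀ x ∈ H.rightCosetFinset g, x⁻¹ ∈ H.rightCosetFinset g := by
      intro x hx
      by_cases hxA : x ∈ A
      · rw [← rightCosetFinset_inv_of_mul_self_mem hgg]
        exact hinvA x hx hxA
      · rwa [hAc x hxA]
    exact exists_isCosetBlock_of_inv_mem hb hinv (Or.inr (hinvol g hgH hinv))
  have hgA : g ∈ A := by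
    by_contra hgA
    refine hgg ?_
    rw [show g * g = 1 by nth_rewrite 1 [← hAc g hgA]; exact inv_mul_cancel g]
    exact H.one_mem
  exact exists_isCosetBlock_of_mem_of_mul_self_notMem hAc hb hgA hgg hinvA

end GeneralizedDihedral

theorem statement_2_general {G : Type*} [Group G] [Fintype G]
    (hG : IsGeneralizedDihedral G) (H : Subgroup G) :
    IsRegularSetOf (H : Set G) 0 1 ↔
      ∀ a b : ℕ, a ≤ Nat.card H - 1 → b ≤ Nat.card H →
        (Odd (Nat.card H) → Even a) → IsRegularSetOf (H : Set G) a b := by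
  classical
  refine ⟨fun hcode a b ha hb hpar => ?_,
    fun h => h 0 1 (Nat.zero_le _) Nat.card_pos fun _ => Even.zero⟩
  obtain ⟨A, hA, hAc⟩ := hG.exists_commute_inv_eq_self
  obtain ⟨Sa, hSaH, hSa1, hSainv, hSacard⟩ := H.exists_inv_closed_subset_card_eq ha hpar
  set V : Finset G := {g | g ∉ H}
  have hVsat : ∀ v ∈ V, H.rightCosetFinset v ⊆ V := by
    intro v hv x hx
    simp only [V, mem_filter, mem_univ, true_and, Subgroup.mem_rightCosetFinset] at hv hx ⊢
    exact fun hxH => hv (by simpa using H.inv_mem (H.mul_mem (H.inv_mem hxH) hx))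
  obtain ⟨Sb, hSbV, hSbinv, hSbcard⟩ := exists_inv_closed_card_inter_rightCosetFinset
    (fun g hg => exists_isCosetBlock_of_commute_inv_eq_self hA hAc
      (fun _ hg => hcode.exists_inv_eq_self_of_zero_one hg) hb hg)
    V hVsat (fun v hv => by simpa [V] using hv) (fun v hv => by simpa [V] using hv)
  exact isRegularSetOf_subgroup_of_finset_union hcode.ne_univ hSaH hSa1 hSainv hSacard
    (fun s hs => by simpa [V] using hSbV hs) hSbinv
    (fun g hg => hSbcard g (by simpa [V] using hg))

theorem statement_2 {G : Type*} [Group G] [Fintype G]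
    (hG : IsGeneralizedDihedral G) (H : Subgroup G) (hH : H ≠ ⊥) :
    IsRegularSetOf (H : Set G) 0 1 ↔
      ∀ a b : ℕ, a ≤ Nat.card H - 1 → b ≤ Nat.card H →
        (Odd (Nat.card H) → Even a) → IsRegularSetOf (H : Set G) a b :=
  statement_2_general hG H
end

section
/- Let G be a finite group whose order equals 4p for some prime p, or equals pq for some primes p and q, and let H be a nontrivial subgroup of G. Then H is a perfect code of G if and only if H is an (a,b)-regular set of G for every pair of integers a, b with 0 ≤ a ≤ |H|−1, 0 ≤ b ≤ |H|, and a even when |H| is odd. -/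
open scoped Pointwise

/-!
If `S` is a connection set, the neighbours in `H` of a vertex `c` are the translates by `c` of
the elements `x ∈ S` with `x c ∈ H`. Hence `H` is an `(a, b)`-regular set iff `S ∩ H` is an
inverse-closed subset of `H \ {1}` of size `a` and `S \ H` is inverse-closed and meets every
right coset `H c ≠ H` in exactly `b` points. The first part exists exactly under the parity
condition (for odd `a` one needs an involution in `H`). For the second part:
* if `H` is normal, take `b` points in one coset of each pair `{Hc, Hc⁻¹}` and their inverses in
  the other; a self-inverse coset needs an inverse-closed `b`-subset, hence an involution when `b`
  is odd, and the perfect code provides one (its unique element in that coset);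
* if `H` has a normal complement `K`, take `X (K \ {1})` for an inverse-closed `X ⊆ H` of size `b`;
* if `|H| ≤ 2`, then `b ∈ {0, 1, |H|}`, and `∅`, the perfect code's connection set or `G \ H` work.
In a group of order `4p` or `pq`, a non-normal subgroup of order `> 2` is an abelian Sylow
subgroup equal to its normalizer, so Burnside's transfer theorem gives it a normal complement.
-/

namespace Function.Involutive

variable {α : Type*} {σ : α → α}

theorem apply_mem_pair_iff (hσ : Involutive σ) {x y : α} :
    σ y ∈ ({x, σ x} : Set α) ↔ y ∈ ({x, σ x} : Set α) := by
  simp only [Set.mem_insert_iff, Set.mem_singleton_iff, hσ.injective.eq_iff, hσ.eq_iff]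
  exact or_comm

theorem exists_invariant_subset_ncard [Finite α] (hσ : Involutive σ) {s : Set α}
    (hs : ∀ x ∈ s, σ x ∈ s) {k : ℕ} (hk : k ≤ s.ncard) (hodd : Odd k → ∃ x ∈ s, σ x = x) :
    ∃ t ⊆ s, t.ncard = k ∧ ∀ x ∈ t, σ x ∈ t := by
  induction k using Nat.strong_induction_on generalizing s with
  | _ k ih =>
  have step : ∀ x ∈ s, ({x, σ x} : Set α).ncard ≤ k → Even (k - ({x, σ x} : Set α).ncard) →
      ∃ t ⊆ s, t.ncard = k ∧ ∀ y ∈ t, σ y ∈ t := by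
    intro x hx hle heven
    set o : Set α := {x, σ x}
    have ho : o ⊆ s := Set.insert_subset hx (Set.singleton_subset_iff.mpr (hs x hx))
    have hpos : 0 < o.ncard := (Set.ncard_pos).mpr ⟨x, Set.mem_insert _ _⟩
    obtain ⟨t, hts, htk, htσ⟩ := ih (k - o.ncard) (by omega) (s := s \ o)
      (fun y hy => ⟨hs y hy.1, fun h => hy.2 (hσ.apply_mem_pair_iff.mp h)⟩)
      (by rw [Set.ncard_sdiff ho]; have := Set.ncard_le_ncard ho; omega)
      (fun h => absurd heven (Nat.not_even_iff_odd.mpr h))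
    refine ⟨t ∪ o, Set.union_subset (hts.trans Set.sdiff_subset) ho, ?_, ?_⟩
    · rw [Set.ncard_union_eq (Set.disjoint_of_subset_left hts Set.disjoint_sdiff_left)]
      omega
    · rintro y (hy | hy)
      · exact Or.inl (htσ y hy)
      · exact Or.inr (hσ.apply_mem_pair_iff.mpr hy)
  rcases Nat.even_or_odd k with hk2 | hk2
  · by_cases hfix : ∀ x ∈ s, σ x = x
    · obtain ⟨t, hts, htk⟩ := Set.exists_subset_card_eq hk
      exact ⟨t, hts, htk, fun x hx => (hfix x (hts hx)).symm ▸ hx⟩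
    push Not at hfix
    obtain ⟨x, hx, hσx⟩ := hfix
    rcases k.eq_zero_or_pos with rfl | hk0
    · exact ⟨∅, Set.empty_subset _, Set.ncard_empty _, fun _ h => h.elim⟩
    have hpair : ({x, σ x} : Set α).ncard = 2 := Set.ncard_pair hσx.symm
    obtain ⟨j, rfl⟩ := hk2
    exact step x hx (by omega) (by rw [hpair]; exact ⟨j - 1, by omega⟩)
  · obtain ⟨x, hx, hσx⟩ := hodd hk2
    have hsingle : ({x, σ x} : Set α).ncard = 1 := by rw [hσx]; simp
    obtain ⟨j, rfl⟩ := hk2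
    exact step x hx (by omega) (by rw [hsingle]; exact ⟨j, by omega⟩)

theorem exists_orbit_representatives (hσ : Involutive σ) :
    ∃ T : Set α, ∀ q, (q ∈ T ∨ σ q ∈ T) ∧ (q ∈ T → σ q ∈ T → σ q = q) := by
  refine ⟨{q | ¬ WellOrderingRel (σ q) q}, fun q => ⟨?_, fun h₁ h₂ => ?_⟩⟩
  · by_contra! h
    simp only [Set.mem_ofPred_eq, not_not, hσ q] at h
    exact asymm h.1 h.2
  · simp only [Set.mem_ofPred_eq, hσ q] at h₁ h₂
    exact ((trichotomous_of WellOrderingRel (σ q) q).resolve_left h₁).resolve_right h₂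

end Function.Involutive

section InvClosedSubsets

variable {G : Type*} [Group G]

theorem Set.exists_subset_inv_eq_self_ncard [Finite G] {s : Set G} (hs : s⁻¹ = s) {k : ℕ}
    (hk : k ≤ s.ncard) (hodd : Odd k → ∃ x ∈ s, x⁻¹ = x) : ∃ t ⊆ s, t⁻¹ = t ∧ t.ncard = k := by
  obtain ⟨t, hts, htk, htinv⟩ := inv_involutive.exists_invariant_subset_ncard
    (fun x hx => by rwa [← Set.mem_inv, hs]) hk hodd
  exact ⟨t, hts, Set.inv_eq_self_iff_inv_subset.mpr (Set.inv_subset.mpr htinv), htk⟩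

lemma Subgroup.ncard_coe (H : Subgroup G) : (H : Set G).ncard = Nat.card H :=
  (Nat.card_coe_set_eq _).symm

lemma Subgroup.exists_inv_eq_self_of_even_card [Finite G] (H : Subgroup G)
    (heven : Even (Nat.card H)) : ∃ x ∈ (H : Set G) \ {1}, x⁻¹ = x := by
  obtain ⟨x, hx⟩ := exists_prime_orderOf_dvd_card' 2 heven.two_dvd
  have hx1 : x ≠ 1 := fun h => by simp [h] at hx
  refine ⟨x, ⟨x.2, by simpa using hx1⟩, ?_⟩
  have hsq := pow_orderOf_eq_one x
  rw [hx, sq] at hsq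
  exact congrArg Subtype.val (inv_eq_of_mul_eq_one_right hsq)

lemma Subgroup.exists_inv_eq_self_subset_ncard [Finite G] (H : Subgroup G) {a : ℕ}
    (ha : a ≤ Nat.card H - 1) (hpar : Odd (Nat.card H) → Even a) :
    ∃ A ⊆ (H : Set G), (1 : G) ∉ A ∧ A⁻¹ = A ∧ A.ncard = a := by
  have hinv : ((H : Set G) \ {1})⁻¹ = (H : Set G) \ {1} := by
    rw [Set.sdiff_eq, Set.inter_inv, Set.compl_inv, inv_coe_set, Set.inv_singleton, inv_one]
  have hcard : ((H : Set G) \ {1}).ncard = Nat.card H - 1 := by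
    rw [Set.ncard_sdiff_singleton_of_mem H.one_mem, H.ncard_coe]
  obtain ⟨A, hAs, hAinv, hAa⟩ :=
    Set.exists_subset_inv_eq_self_ncard hinv (hcard ▸ ha) fun hodd =>
      H.exists_inv_eq_self_of_even_card (Nat.not_odd_iff_even.mp fun h =>
        Nat.not_even_iff_odd.mpr hodd (hpar h))
  exact ⟨A, hAs.trans Set.sdiff_subset, fun h => (hAs h).2 rfl, hAinv, hAa⟩

end InvClosedSubsets

section CayleyGraph

variable {G : Type*} [Group G]

/-- The part outside `H` of a connection set in which `H` is a `(·, b)`-regular set. -/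
def IsCosetRegular (H : Subgroup G) (B : Set G) (b : ℕ) : Prop :=
  B⁻¹ = B ∧ (∀ x ∈ B, x ∉ H) ∧ ∀ c ∉ H, {x | x ∈ B ∧ x * c ∈ H}.ncard = b

lemma ncard_cayleyGraph_adj_mem_subgroup {S : Set G} (hS : S = S⁻¹) (hS1 : (1 : G) ∉ S)
    (H : Subgroup G) (v : G) :
    {u | u ∈ (H : Set G) ∧ (cayleyGraph S hS).Adj v u}.ncard = {x | x ∈ S ∧ x * v ∈ H}.ncard := by
  have himage : {u | u ∈ (H : Set G) ∧ (cayleyGraph S hS).Adj v u} =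
      (· * v) '' {x | x ∈ S ∧ x * v ∈ H} := by
    ext u
    constructor
    · rintro ⟨huH, -, huS⟩
      exact ⟨u * v⁻¹, ⟨huS, by simpa using huH⟩, by simp⟩
    · rintro ⟨x, ⟨hxS, hxH⟩, rfl⟩
      refine ⟨hxH, fun h => hS1 ?_, by simpa using hxS⟩
      rwa [← right_eq_mul.mp h]
  rw [himage, Set.ncard_image_of_injective _ (mul_left_injective v)]

lemma IsRegularSetOf.exists_isCosetRegular {H : Subgroup G} {a b : ℕ}
    (h : IsRegularSetOf (H : Set G) a b) : H ≠ ⊤ ∧ ∃ B, IsCosetRegular H B b := by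
  obtain ⟨S, hS, hS1, -, hne, -, hout⟩ := h
  refine ⟨fun htop => hne (by simp [htop]), S \ H, ?_, fun x hx => hx.2, fun c hc => ?_⟩
  · rw [Set.sdiff_eq, Set.inter_inv, Set.compl_inv, ← hS, inv_coe_set]
  · rw [← hout c hc, ncard_cayleyGraph_adj_mem_subgroup hS hS1]
    congr 1
    ext x
    refine ⟨fun hx => ⟨hx.1.1, hx.2⟩, fun hx => ⟨⟨hx.1, fun hxH => hc ?_⟩, hx.2⟩⟩
    exact (H.mul_mem_cancel_left hxH).mp hx.2

lemma isRegularSetOf_of_isCosetRegular {H : Subgroup G} {A B : Set G} {a b : ℕ} (htop : H ≠ ⊤)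
    (hAH : A ⊆ H) (hA1 : (1 : G) ∉ A) (hAinv : A⁻¹ = A) (hA : A.ncard = a)
    (hB : IsCosetRegular H B b) : IsRegularSetOf (H : Set G) a b := by
  obtain ⟨hBinv, hBH, hBc⟩ := hB
  have hS : A ∪ B = (A ∪ B)⁻¹ := by rw [Set.union_inv, hAinv, hBinv]
  have hS1 : (1 : G) ∉ A ∪ B := fun h => h.elim hA1 (fun h => hBH 1 h H.one_mem)
  refine ⟨A ∪ B, hS, hS1, ⟨1, H.one_mem⟩,
    fun h => htop (by simpa using h), fun v hv => ?_, fun v hv => ?_⟩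
  · rw [ncard_cayleyGraph_adj_mem_subgroup hS hS1 H, ← hA]
    congr 1
    ext x
    refine ⟨fun ⟨hx, hxv⟩ => hx.resolve_right fun hxB => hBH x hxB ?_,
      fun hx => ⟨Or.inl hx, H.mul_mem (hAH hx) hv⟩⟩
    exact (H.mul_mem_cancel_right hv).mp hxv
  · rw [ncard_cayleyGraph_adj_mem_subgroup hS hS1 H, ← hBc v hv]
    congr 1
    ext x
    refine ⟨fun ⟨hx, hxv⟩ => ⟨hx.resolve_left fun hxA => hv ?_, hxv⟩, fun hx => ⟨Or.inr hx.1, hx.2⟩⟩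
    exact (H.mul_mem_cancel_left (hAH hxA)).mp hxv

end CayleyGraph

section CosetRegular

variable {G : Type*} [Group G]

lemma isCosetRegular_empty (H : Subgroup G) : IsCosetRegular H ∅ 0 :=
  ⟨Set.inv_empty, fun _ h => h.elim, fun _ _ => by simp⟩

lemma isCosetRegular_compl (H : Subgroup G) : IsCosetRegular H (H : Set G)ᶜ (Nat.card H) := by
  refine ⟨by rw [Set.compl_inv, inv_coe_set], fun _ h => h, fun c hc => ?_⟩
  have himage : {x | x ∈ (H : Set G)ᶜ ∧ x * c ∈ H} = (· * c⁻¹) '' H := by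
    ext x
    refine ⟨fun hx => ⟨x * c, hx.2, by simp⟩, ?_⟩
    rintro ⟨h, hh, rfl⟩
    refine ⟨fun hmem => hc ?_, by simpa using hh⟩
    simpa using H.mul_mem (H.inv_mem hmem) hh
  rw [himage, Set.ncard_image_of_injective _ (mul_left_injective _), H.ncard_coe]

lemma exists_isCosetRegular_of_isComplement' [Finite G] {H K : Subgroup G} [K.Normal]
    (hKH : K.IsComplement' H) {b : ℕ} (hb : b ≤ Nat.card H) : ∃ B, IsCosetRegular H B b := by
  have hHinv : (H : Set G)⁻¹ = H := inv_coe_set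
  obtain ⟨X, hXH, hXinv, hXb⟩ := Set.exists_subset_inv_eq_self_ncard hHinv
    (H.ncard_coe ▸ hb) (fun _ => ⟨1, H.one_mem, inv_one⟩)
  have hdisj : ∀ k ∈ K, k ∈ H → k = 1 := fun _ => Subgroup.disjoint_def.mp hKH.disjoint
  refine ⟨X * ((K : Set G) \ {1}), ?_, ?_, fun c hc => ?_⟩
  · -- `(y k)⁻¹ = y⁻¹ (y k⁻¹ y⁻¹)` with `y k⁻¹ y⁻¹ ∈ K \ {1}`
    refine Set.inv_eq_self_iff_inv_subset.mpr ?_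
    rintro _ ⟨y, hy, k, ⟨hk, hk1⟩, hyk⟩
    refine ⟨y⁻¹, by rwa [← Set.mem_inv, hXinv], y * k⁻¹ * y⁻¹, ⟨?_, ?_⟩, ?_⟩
    · exact ‹K.Normal›.conj_mem _ (K.inv_mem hk) y
    · simpa using hk1
    · rw [inv_eq_iff_eq_inv.mp hyk.symm]
      group
  · rintro _ ⟨y, hy, k, ⟨hk, hk1⟩, rfl⟩ hyk
    exact hk1 (hdisj k hk ((H.mul_mem_cancel_left (hXH hy)).mp hyk))
  · obtain ⟨⟨⟨k₀, hk₀⟩, ⟨h₀, hh₀⟩⟩, rfl⟩ := hKH.2 c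
    have hk₀1 : k₀⁻¹ ≠ 1 := fun h => hc (by simpa [inv_eq_one.mp h] using hh₀)
    -- `y k (k₀ h₀) ∈ H` with `y, h₀ ∈ H` forces `k k₀ ∈ H ∩ K = 1`
    have himage : {x | x ∈ X * ((K : Set G) \ {1}) ∧ x * (k₀ * h₀) ∈ H} = (· * k₀⁻¹) '' X := by
      ext x
      constructor
      · rintro ⟨⟨y, hy, k, ⟨hk, -⟩, rfl⟩, hmem⟩
        have hkk₀ : k * k₀ ∈ H := by
          rw [show y * k * (k₀ * h₀) = y * (k * k₀) * h₀ by group] at hmem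
          exact (H.mul_mem_cancel_left (hXH hy)).mp ((H.mul_mem_cancel_right hh₀).mp hmem)
        refine ⟨y, hy, ?_⟩
        simp [eq_inv_of_mul_eq_one_left (hdisj _ (K.mul_mem hk hk₀) hkk₀)]
      · rintro ⟨y, hy, rfl⟩
        refine ⟨⟨y, hy, k₀⁻¹, ⟨K.inv_mem hk₀, hk₀1⟩, rfl⟩, ?_⟩
        simpa [mul_assoc] using H.mul_mem (hXH hy) hh₀
    rw [himage, Set.ncard_image_of_injective _ (mul_left_injective _), hXb]

end CosetRegular

section Normal

variable {G : Type*} [Group G] {H : Subgroup G}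

lemma QuotientGroup.ncard_setOf_mk_eq (q : G ⧸ H) :
    {x : G | (x : G ⧸ H) = q}.ncard = Nat.card H := by
  have h := QuotientGroup.card_preimage_mk H {q}
  simp only [Nat.card_coe_set_eq, Set.ncard_singleton, mul_one] at h
  exact h

variable [H.Normal]

lemma QuotientGroup.mul_mem_iff_mk_eq_inv {x c : G} :
    x * c ∈ H ↔ (x : G ⧸ H) = (c : G ⧸ H)⁻¹ := by
  rw [← QuotientGroup.eq_one_iff, QuotientGroup.mk_mul, mul_eq_one_iff_eq_inv]

lemma IsCosetRegular.exists_inv_eq_self_mk_eq {S : Set G} (hS : IsCosetRegular H S 1)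
    (q : G ⧸ H) (hq : q⁻¹ = q) : ∃ x : G, (x : G ⧸ H) = q ∧ x⁻¹ = x := by
  obtain ⟨c, hc⟩ := QuotientGroup.mk_surjective q⁻¹
  by_cases hcH : c ∈ H
  · refine ⟨1, ?_, inv_one⟩
    rw [QuotientGroup.mk_one, eq_comm, ← inv_eq_one, ← hc, QuotientGroup.eq_one_iff]
    exact hcH
  -- the unique element of `S` in the coset `q` is its own inverse, since `S⁻¹ = S` and `q⁻¹ = q`
  obtain ⟨s, hs⟩ := Set.ncard_eq_one.mp (hS.2.2 c hcH)
  have hmem : ∀ x, x ∈ S ∧ x * c ∈ H ↔ x = s := fun x => Set.ext_iff.mp hs x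
  have hsq : (s : G ⧸ H) = q := by
    rw [QuotientGroup.mul_mem_iff_mk_eq_inv.mp ((hmem s).mpr rfl).2, hc, inv_inv]
  refine ⟨s, hsq, (hmem s⁻¹).mp ⟨?_, ?_⟩⟩
  · rw [← hS.1]
    exact Set.inv_mem_inv.mpr ((hmem s).mpr rfl).1
  · rw [QuotientGroup.mul_mem_iff_mk_eq_inv, QuotientGroup.mk_inv, hsq, hc, inv_inv]
    exact hq

lemma exists_subset_setOf_mk_eq [Finite G]
    (hfix : ∀ q : G ⧸ H, q⁻¹ = q → ∃ x : G, (x : G ⧸ H) = q ∧ x⁻¹ = x) {b : ℕ}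
    (hb : b ≤ Nat.card H) (q : G ⧸ H) :
    ∃ W ⊆ {x : G | (x : G ⧸ H) = q}, (q⁻¹ = q → W⁻¹ = W) ∧ W.ncard = b := by
  have hcard := (QuotientGroup.ncard_setOf_mk_eq q).symm ▸ hb
  by_cases hq : q⁻¹ = q
  · obtain ⟨x, hxq, hx⟩ := hfix q hq
    have hinv : {x : G | (x : G ⧸ H) = q}⁻¹ = {x : G | (x : G ⧸ H) = q} := by
      ext y
      simp only [Set.mem_inv, Set.mem_ofPred_eq, QuotientGroup.mk_inv]
      rw [inv_eq_iff_eq_inv, hq]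
    obtain ⟨W, hWq, hWinv, hWb⟩ :=
      Set.exists_subset_inv_eq_self_ncard hinv hcard fun _ => ⟨x, hxq, hx⟩
    exact ⟨W, hWq, fun _ => hWinv, hWb⟩
  · obtain ⟨W, hWq, hWb⟩ := Set.exists_subset_card_eq hcard
    exact ⟨W, hWq, fun h => absurd h hq, hWb⟩

lemma ncard_setOf_mem_union_inv_mk_eq {W : G ⧸ H → Set G}
    (hWq : ∀ q, W q ⊆ {x | (x : G ⧸ H) = q}) (hWinv : ∀ q, q⁻¹ = q → (W q)⁻¹ = W q) {b : ℕ}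
    (hWb : ∀ q, (W q).ncard = b) {T : Set (G ⧸ H)} (hT : ∀ q ∈ T, q⁻¹ ∈ T → q⁻¹ = q)
    {q : G ⧸ H} (hq : q ∈ T ∨ q⁻¹ ∈ T) :
    {x | x ∈ {y : G | (y : G ⧸ H) ∈ T ∧ y ∈ W y} ∪ {y : G | (y : G ⧸ H) ∈ T ∧ y ∈ W y}⁻¹ ∧
      (x : G ⧸ H) = q}.ncard = b := by
  by_cases hqT : q ∈ T
  · rw [← hWb q]
    congr 1
    ext x
    refine ⟨?_, fun hx => ?_⟩
    · rintro ⟨⟨-, hxW⟩ | ⟨hxT, hxW⟩, rfl⟩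
      · exact hxW
      · rw [QuotientGroup.mk_inv] at hxT hxW
        rw [hT _ hqT hxT] at hxW
        rw [← hWinv _ (hT _ hqT hxT)]
        exact hxW
    · have hxq : (x : G ⧸ H) = q := hWq q hx
      exact ⟨Or.inl ⟨hxq ▸ hqT, hxq ▸ hx⟩, hxq⟩
  · have hqT' : q⁻¹ ∈ T := hq.resolve_left hqT
    rw [← hWb q⁻¹, ← Set.ncard_inv (W q⁻¹)]
    congr 1
    ext x
    refine ⟨?_, fun hx => ?_⟩
    · rintro ⟨⟨hxT, -⟩ | ⟨-, hxW⟩, rfl⟩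
      · exact absurd hxT hqT
      · rwa [QuotientGroup.mk_inv] at hxW
    · have hxq : ((x⁻¹ : G) : G ⧸ H) = q⁻¹ := hWq q⁻¹ hx
      rw [QuotientGroup.mk_inv, inv_inj] at hxq
      refine ⟨Or.inr ⟨?_, ?_⟩, hxq⟩ <;> rwa [QuotientGroup.mk_inv, hxq]

lemma exists_isCosetRegular_of_normal [Finite G]
    (hfix : ∀ q : G ⧸ H, q⁻¹ = q → ∃ x : G, (x : G ⧸ H) = q ∧ x⁻¹ = x) {b : ℕ}
    (hb : b ≤ Nat.card H) : ∃ B, IsCosetRegular H B b := by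
  choose W hWq hWinv hWb using exists_subset_setOf_mk_eq hfix hb
  obtain ⟨T, hT⟩ := (inv_involutive (G := G ⧸ H)).exists_orbit_representatives
  -- `W q` in one coset `q ≠ 1` of each pair `{q, q⁻¹}`, its inverse in the other
  set W' : Set G := {x | (x : G ⧸ H) ∈ T \ {1} ∧ x ∈ W x}
  have hW'H : ∀ x ∈ W', x ∉ H := fun x hx hxH => hx.1.2 ((QuotientGroup.eq_one_iff x).mpr hxH)
  refine ⟨W' ∪ W'⁻¹, by rw [Set.union_inv, inv_inv, Set.union_comm], ?_, fun c hc => ?_⟩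
  · rintro x (hx | hx) hxH
    exacts [hW'H x hx hxH, hW'H _ hx (H.inv_mem hxH)]
  have hc1 : (c : G ⧸ H)⁻¹ ≠ 1 := by rwa [inv_ne_one, ne_eq, QuotientGroup.eq_one_iff]
  have hcT : (c : G ⧸ H)⁻¹ ∈ T \ {1} ∨ (c : G ⧸ H)⁻¹⁻¹ ∈ T \ {1} :=
    ((hT _).1.imp (⟨·, hc1⟩) (⟨·, inv_ne_one.mpr hc1⟩))
  simp only [QuotientGroup.mul_mem_iff_mk_eq_inv]
  exact ncard_setOf_mem_union_inv_mk_eq hWq hWinv hWb (fun q hq hq' => (hT q).2 hq.1 hq'.1) hcT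

end Normal

section NormalComplement

open Subgroup

lemma Nat.not_dvd_of_ne_minFac_mul {p q : ℕ} (hp : p.Prime) (hq : q.Prime)
    (hmin : q ≠ (p * q).minFac) : ¬ p ∣ q := by
  intro hpq
  obtain rfl := (Nat.prime_dvd_prime_iff_eq hp hq).mp hpq
  have hmf := Nat.minFac_prime (by nlinarith [hp.two_le] : p * p ≠ 1)
  rcases hmf.dvd_mul.mp (Nat.minFac_dvd _) with h | h <;>
    exact hmin ((Nat.prime_dvd_prime_iff_eq hmf hp).mp h).symm

lemma Nat.exists_prime_of_mul_eq_four_mul {p n m : ℕ} (hp : p.Prime) (hnm : n * m = 4 * p)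
    (hn : 2 < n) (hm : m ≠ 1) (hm2 : m ≠ 2) :
    ∃ r, r.Prime ∧ (n = r ∨ n = r ^ 2) ∧ ¬ r ∣ m ∧ ∀ d, d ∣ m → d ≡ 1 [MOD r] → d = 1 ∨ d = m := by
  obtain ⟨a, b, ha, hb, rfl⟩ := Nat.dvd_mul.mp (Dvd.intro m hnm)
  have ha' : a = 1 ∨ a = 2 ∨ a = 4 := by
    have := Nat.le_of_dvd (by norm_num) ha
    interval_cases a <;> simp_all
  rcases (Nat.dvd_prime hp).mp hb with rfl | hb
  · obtain rfl : a = 4 := by omega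
    obtain rfl : m = p := by omega
    have h2m : ¬ 2 ∣ m := fun h => hm2 ((Nat.prime_dvd_prime_iff_eq Nat.prime_two hp).mp h).symm
    exact ⟨2, Nat.prime_two, Or.inr rfl, h2m, fun d hd _ => (Nat.dvd_prime hp).mp hd⟩
  subst b
  rcases ha' with rfl | rfl | rfl
  · obtain rfl : m = 4 := Nat.eq_of_mul_eq_mul_left hp.pos (by linarith)
    have hp2 : 2 < p := by omega
    refine ⟨p, hp, Or.inl (one_mul p), fun h => ?_, fun d hd hd1 => ?_⟩
    · have := Nat.le_of_dvd two_pos (hp.dvd_of_dvd_pow (show p ∣ 2 ^ 2 from h))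
      omega
    · have := Nat.le_of_dvd (by norm_num) hd
      interval_cases d
      · simp at hd
      · exact Or.inl rfl
      · rw [Nat.ModEq, Nat.mod_eq_of_lt hp2, Nat.mod_eq_of_lt (by omega)] at hd1
        omega
      · norm_num at hd
      · exact Or.inr rfl
  · exact absurd (Nat.eq_of_mul_eq_mul_left (by omega : 0 < 2 * p) (by linarith)) hm2
  · exact absurd (by nlinarith [hp.pos] : m = 1) hm

lemma Nat.exists_prime_of_mul_eq_mul {p q n m : ℕ} (hp : p.Prime) (hq : q.Prime)
    (hnm : n * m = p * q) (hn : 2 < n) (hm : m ≠ 1) (hmin : m ≠ (p * q).minFac) :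
    ∃ r, r.Prime ∧ (n = r ∨ n = r ^ 2) ∧ ¬ r ∣ m ∧ ∀ d, d ∣ m → d ≡ 1 [MOD r] → d = 1 ∨ d = m := by
  obtain ⟨a, b, ha, hb, rfl⟩ := Nat.dvd_mul.mp (Dvd.intro m hnm)
  rcases (Nat.dvd_prime hp).mp ha with rfl | ha <;> rcases (Nat.dvd_prime hq).mp hb with rfl | hb
  · omega
  · subst b
    obtain rfl : m = p := Nat.eq_of_mul_eq_mul_left hq.pos (by linarith)
    rw [mul_comm] at hmin
    exact ⟨q, hq, Or.inl (one_mul q), Nat.not_dvd_of_ne_minFac_mul hq hp hmin,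
      fun d hd _ => (Nat.dvd_prime hp).mp hd⟩
  · subst a
    obtain rfl : m = q := Nat.eq_of_mul_eq_mul_left hp.pos (by linarith)
    exact ⟨p, hp, Or.inl (mul_one p), Nat.not_dvd_of_ne_minFac_mul hp hq hmin,
      fun d hd _ => (Nat.dvd_prime hq).mp hd⟩
  · subst a b
    exact absurd (by nlinarith [hp.pos, hq.pos] : m = 1) hm

/-- The orders `n * m` with `n = |H|` and `m = [G : H]` for which `H` is an abelian Sylow
`r`-subgroup whose number of conjugates is pinned down by Sylow's theorems. -/
lemma Nat.exists_prime_of_mul_eq {N n m : ℕ}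
    (hN : (∃ p : ℕ, p.Prime ∧ N = 4 * p) ∨ (∃ p q : ℕ, p.Prime ∧ q.Prime ∧ N = p * q))
    (hnm : n * m = N) (hn : 2 < n) (hm : m ≠ 1) (hmin : m ≠ N.minFac) :
    ∃ r, r.Prime ∧ (n = r ∨ n = r ^ 2) ∧ ¬ r ∣ m ∧ ∀ d, d ∣ m → d ≡ 1 [MOD r] → d = 1 ∨ d = m := by
  rcases hN with ⟨p, hp, rfl⟩ | ⟨p, q, hp, hq, rfl⟩
  · have hmin2 : (4 * p).minFac = 2 :=
      (Nat.minFac_eq_two_iff _).mpr (dvd_mul_of_dvd_left (by norm_num) _)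
    exact Nat.exists_prime_of_mul_eq_four_mul hp hnm hn hm (hmin2 ▸ hmin)
  · exact Nat.exists_prime_of_mul_eq_mul hp hq hnm hn hm hmin

variable {G : Type*} [Group G] [Finite G]

theorem IsPGroup.exists_normal_isComplement' {r : ℕ} [Fact r.Prime] {H : Subgroup G}
    (hr : IsPGroup r H) (hidx : ¬ r ∣ H.index) [IsMulCommutative H]
    (hcard : Nat.card (Sylow r G) = H.index) : ∃ K : Subgroup G, K.Normal ∧ K.IsComplement' H := by
  set P := hr.toSylow hidx
  have hPH : (P : Set G) = H := congrArg ((↑) : Subgroup G → Set G) (hr.toSylow_coe hidx)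
  have hN : normalizer (H : Set G) ≤ H := by
    have h := relIndex_mul_index (le_normalizer (H := H))
    rw [← hPH, ← P.card_eq_index_normalizer, hcard] at h
    exact relIndex_eq_one.mp ((mul_eq_right₀ H.index_ne_zero_of_finite).mp h)
  have hP : normalizer (P : Set G) ≤ centralizer (P : Set G) := by
    rw [hPH]
    exact hN.trans (le_centralizer_iff_isMulCommutative.mpr inferInstance)
  refine ⟨(MonoidHom.transferSylow P hP).ker, inferInstance, ?_⟩
  convert MonoidHom.ker_transferSylow_isComplement' P hP
  exact (hr.toSylow_coe hidx).symm

theorem Subgroup.exists_normal_isComplement'_of_not_normal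
    (hG : (∃ p : ℕ, p.Prime ∧ Nat.card G = 4 * p) ∨
      (∃ p q : ℕ, p.Prime ∧ q.Prime ∧ Nat.card G = p * q))
    {H : Subgroup G} (hnn : ¬ H.Normal) (h2 : 2 < Nat.card H) :
    ∃ K : Subgroup G, K.Normal ∧ K.IsComplement' H := by
  have hm : H.index ≠ 1 := fun h => hnn (by rw [index_eq_one.mp h]; exact normal_top)
  have hmin : H.index ≠ (Nat.card G).minFac := fun h => hnn (normal_of_index_eq_minFac_card h)
  obtain ⟨r, hr, hn, hrm, hdiv⟩ := Nat.exists_prime_of_mul_eq hG H.card_mul_index h2 hm hmin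
  have := Fact.mk hr
  have hH : IsPGroup r H := by
    rcases hn with hn | hn
    · exact IsPGroup.of_card (n := 1) (by rw [hn, pow_one])
    · exact IsPGroup.of_card hn
  have : IsMulCommutative H := by
    rcases hn with hn | hn
    · have := isCyclic_of_prime_card hn
      infer_instance
    · exact IsPGroup.isMulCommutative_of_card_eq_prime_sq hn
  refine hH.exists_normal_isComplement' hrm ?_
  have hPH := hH.toSylow_coe hrm
  rcases hdiv _ (hPH ▸ (hH.toSylow hrm).card_dvd_index) (card_sylow_modEq_one r G) with h | h
  · have := (Nat.card_eq_one_iff_unique.mp h).1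
    exact absurd (hPH ▸ (hH.toSylow hrm).normal_of_subsingleton) hnn
  · exact h

end NormalComplement

lemma exists_isCosetRegular {G : Type*} [Group G] [Finite G]
    (hG : (∃ p : ℕ, p.Prime ∧ Nat.card G = 4 * p) ∨
      (∃ p q : ℕ, p.Prime ∧ q.Prime ∧ Nat.card G = p * q))
    {H : Subgroup G} {S : Set G} (hS : IsCosetRegular H S 1) {b : ℕ} (hb : b ≤ Nat.card H) :
    ∃ B, IsCosetRegular H B b := by
  by_cases hnormal : H.Normal
  · exact exists_isCosetRegular_of_normal hS.exists_inv_eq_self_mk_eq hb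
  by_cases hsmall : Nat.card H ≤ 2
  · obtain rfl | rfl | rfl : b = 0 ∨ b = 1 ∨ b = Nat.card H := by omega
    exacts [⟨∅, isCosetRegular_empty H⟩, ⟨S, hS⟩, ⟨_, isCosetRegular_compl H⟩]
  obtain ⟨K, hK, hKH⟩ := H.exists_normal_isComplement'_of_not_normal hG hnormal (by omega)
  exact exists_isCosetRegular_of_isComplement' hKH hb

theorem statement_4_general {G : Type*} [Group G] [Fintype G]
    (hG : (∃ p : ℕ, p.Prime ∧ Nat.card G = 4 * p) ∨
      (∃ p q : ℕ, p.Prime ∧ q.Prime ∧ Nat.card G = p * q))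
    (H : Subgroup G) :
    IsRegularSetOf (H : Set G) 0 1 ↔
      ∀ a b : ℕ, a ≤ Nat.card H - 1 → b ≤ Nat.card H →
        (Odd (Nat.card H) → Even a) → IsRegularSetOf (H : Set G) a b := by
  refine ⟨fun hcode a b ha hb hpar => ?_,
    fun h => h 0 1 (Nat.zero_le _) Nat.card_pos fun _ => Even.zero⟩
  obtain ⟨htop, S, hS⟩ := hcode.exists_isCosetRegular
  obtain ⟨A, hAH, hA1, hAinv, hAa⟩ := H.exists_inv_eq_self_subset_ncard ha hpar
  obtain ⟨B, hB⟩ := exists_isCosetRegular hG hS hb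
  exact isRegularSetOf_of_isCosetRegular htop hAH hA1 hAinv hAa hB

theorem statement_4 {G : Type*} [Group G] [Fintype G]
    (hG : (∃ p : ℕ, p.Prime ∧ Nat.card G = 4 * p) ∨
      (∃ p q : ℕ, p.Prime ∧ q.Prime ∧ Nat.card G = p * q))
    (H : Subgroup G) (hH : H ≠ ⊥) :
    IsRegularSetOf (H : Set G) 0 1 ↔
      ∀ a b : ℕ, a ≤ Nat.card H - 1 → b ≤ Nat.card H →
        (Odd (Nat.card H) → Even a) → IsRegularSetOf (H : Set G) a b :=
  statement_4_general hG H
end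

section
/- Let G be a finite group that is either a generalized dihedral group or has order 4p or pq for some primes p and q, and let H be a nontrivial subgroup of G. If H is a perfect code of G, then for every integer ℓ with −|H| ≤ ℓ ≤ |H|−1 there exists an inverse-closed subset S of G∖{e} such that the real adjacency matrix of the Cayley graph Cay(G,S) has ℓ as an eigenvalue. -/
open scoped Pointwise

open Classical in
/-- The adjacency matrix over `ℝ` of a graph. -/
noncomputable def adjMat {V : Type*} (Γ : SimpleGraph V) : Matrix V V ℝ :=
  Matrix.of fun i j => if Γ.Adj i j then 1 else 0


/-!
If `H` is a perfect code in `Cay(G, T)`, then `T` misses `H` and meets every right coset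
`Hg ≠ H` in exactly one element. Now let `D ⊆ H \ {1}` and `T' ⊆ G \ H` be inverse-closed,
with `T'` meeting every coset `Hg ≠ H` in `c > 0` elements. In `Cay(G, D ∪ T')` the partition
`{H, G \ H}` is equitable with quotient matrix `[[|D|, |T'|], [c, |D| + |T'| - c]]`, so
`|D| - c` is an eigenvalue. The choices `T' = T`, `G \ H`, `(G \ H) \ T` give `c = 1`,
`|H|`, `|H| - 1`, and the regular graph `Cay(G, D)` has eigenvalue `|D|`. As `H \ {1}` has
inverse-closed subsets of size `d` or `d + 1` for every `d ≤ |H| - 1`, these eigenvalues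
cover `[-|H|, |H| - 1]`.
-/

open Set Matrix

section InvClosed

variable {α : Type*} [InvolutiveInv α]

theorem Set.sdiff_inv (s t : Set α) : (s \ t)⁻¹ = s⁻¹ \ t⁻¹ :=
  preimage_sdiff _ _ _

theorem exists_subset_inv_eq_ncard_eq_or_eq_succ {A : Set α} (hA : A⁻¹ = A) :
    ∀ d ≤ A.ncard, ∃ D ⊆ A, D⁻¹ = D ∧ (D.ncard = d ∨ D.ncard = d + 1) := by
  intro d hd
  induction d with
  | zero => exact ⟨∅, empty_subset A, inv_empty, Or.inl (ncard_empty α)⟩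
  | succ d ih =>
    have hAfin : A.Finite := finite_of_ncard_pos (by omega)
    obtain ⟨D, hDA, hD, hDcard | hDcard⟩ := ih (by omega)
    · obtain ⟨x, hxA, hxD⟩ : (A \ D).Nonempty := by
        apply nonempty_of_ncard_ne_zero
        rw [ncard_sdiff hDA (hAfin.subset hDA)]
        omega
      have hxD' : x⁻¹ ∉ D := by rwa [← hD, inv_mem_inv]
      have hpair : ({x, x⁻¹} : Set α).ncard = 1 ∨ ({x, x⁻¹} : Set α).ncard = 2 := by
        by_cases hx : x = x⁻¹
        · simp [← hx]
        · simp [ncard_pair hx]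
      refine ⟨D ∪ {x, x⁻¹}, union_subset hDA (insert_subset hxA ?_), ?_, ?_⟩
      · rwa [singleton_subset_iff, ← hA, inv_mem_inv]
      · rw [union_inv, hD, inv_insert, inv_singleton, inv_inv, pair_comm]
      · rw [ncard_union_eq (disjoint_right.2 ?_) (hAfin.subset hDA) (toFinite _)]
        · omega
        · rintro y (rfl | rfl) <;> assumption
    · exact ⟨D, hDA, hD, Or.inl hDcard⟩

theorem exists_subset_inv_eq_ncard_add_eq_or_succ {A : Set α} (hA : A⁻¹ = A)
    (hfin : A.Finite) :
    ∀ d ≤ A.ncard,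
      ∃ D ⊆ A, D⁻¹ = D ∧ (D.ncard + d = A.ncard ∨ D.ncard + d + 1 = A.ncard) := by
  intro d hd
  obtain ⟨D, hDA, hD, hDcard⟩ := exists_subset_inv_eq_ncard_eq_or_eq_succ hA d hd
  refine ⟨A \ D, sdiff_subset, by rw [sdiff_inv, hA, hD], ?_⟩
  have := ncard_sdiff_add_ncard_of_subset hDA hfin
  omega

end InvClosed

section Graph

variable {V : Type*} [Fintype V] (Γ : SimpleGraph V)

theorem adjMat_mulVec_indicator (P : Set V) (x : V) :
    (adjMat Γ *ᵥ P.indicator 1) x = ({y | y ∈ P ∧ Γ.Adj x y}.ncard : ℝ) := by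
  classical
  simp only [mulVec, dotProduct, adjMat, of_apply, indicator_apply, Pi.one_apply, mul_ite,
    mul_one, mul_zero, ← ite_and, Finset.sum_boole, ncard_eq_toFinset_card', toFinset_ofPred]

theorem adjMat_mulVec_one_of_regular {r : ℕ} (hreg : ∀ x, {y | Γ.Adj x y}.ncard = r) :
    adjMat Γ *ᵥ 1 = (r : ℝ) • 1 := by
  ext x
  simpa [hreg] using adjMat_mulVec_indicator Γ univ x

theorem exists_eigenvector_of_regular_of_two_part {r a c : ℕ}
    (hreg : ∀ x, {y | Γ.Adj x y}.ncard = r) {P : Set V} (hP : P ≠ univ)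
    (hin : ∀ x ∈ P, {y | y ∈ P ∧ Γ.Adj x y}.ncard = a)
    (hout : ∀ x ∉ P, {y | y ∈ P ∧ Γ.Adj x y}.ncard = c) (hc : c ≠ 0) :
    ∃ v : V → ℝ, v ≠ 0 ∧ adjMat Γ *ᵥ v = ((a : ℝ) - c) • v := by
  obtain ⟨z, hz⟩ := (ne_univ_iff_exists_notMem P).1 hP
  -- `(a - r, c)` is an eigenvector of the quotient matrix `[[a, r - a], [c, r - c]]`.
  refine ⟨(c : ℝ) • 1 + ((a : ℝ) - r - c) • P.indicator 1, fun h => ?_, ?_⟩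
  · have := congrFun h z
    simp_all
  · ext x
    simp only [mulVec_add, mulVec_smul, adjMat_mulVec_one_of_regular Γ hreg,
      adjMat_mulVec_indicator, Pi.add_apply, Pi.smul_apply, Pi.one_apply, smul_eq_mul]
    by_cases hx : x ∈ P
    · simp only [hin x hx, indicator_of_mem hx, Pi.one_apply]; ring
    · simp only [hout x hx, indicator_of_notMem hx]; ring

end Graph

def IsCayleyEigenvalue (G : Type*) [Group G] [Fintype G] (ℓ : ℤ) : Prop :=
  ∃ (S : Set G) (hS : S = S⁻¹), (1 : G) ∉ S ∧
    ∃ v : G → ℝ, v ≠ 0 ∧ adjMat (cayleyGraph S hS) *ᵥ v = (ℓ : ℝ) • v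

section Cayley

variable {G : Type*} [Group G] {S : Set G}

theorem cayleyGraph_adj_iff (hS : S = S⁻¹) (h1 : (1 : G) ∉ S) {x y : G} :
    (cayleyGraph S hS).Adj x y ↔ y * x⁻¹ ∈ S :=
  ⟨And.right, fun h => ⟨fun hxy => h1 (by rwa [hxy, mul_inv_cancel] at h), h⟩⟩

theorem ncard_cayleyGraph_adj (hS : S = S⁻¹) (h1 : (1 : G) ∉ S) (x : G) :
    {y | (cayleyGraph S hS).Adj x y}.ncard = S.ncard := by
  rw [show {y | (cayleyGraph S hS).Adj x y} = (· * x⁻¹) ⁻¹' S from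
      ext fun y => cayleyGraph_adj_iff hS h1, ← image_mul_right,
    ncard_image_of_injective S (mul_left_injective x)]

theorem ncard_mem_subgroup_cayleyGraph_adj (hS : S = S⁻¹) (h1 : (1 : G) ∉ S)
    (H : Subgroup G) {x : G} (hx : x ∈ H) :
    {y | y ∈ (H : Set G) ∧ (cayleyGraph S hS).Adj x y}.ncard = (S ∩ H).ncard := by
  have hSH : S ∩ H = (S ∩ H)⁻¹ := by rw [inter_inv, ← hS, inv_coe_set]
  have h1' : (1 : G) ∉ S ∩ H := fun h => h1 h.1
  rw [← ncard_cayleyGraph_adj hSH h1' x]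
  congr 1
  ext y
  simp only [mem_ofPred_eq, cayleyGraph_adj_iff hS h1, cayleyGraph_adj_iff hSH h1',
    mem_inter_iff, SetLike.mem_coe, H.mul_mem_cancel_right (H.inv_mem hx), and_comm]

variable [Fintype G]

theorem isCayleyEigenvalue_ncard (hS : S = S⁻¹) (h1 : (1 : G) ∉ S) :
    IsCayleyEigenvalue G S.ncard :=
  ⟨S, hS, h1, 1, one_ne_zero, by
    rw [adjMat_mulVec_one_of_regular _ (ncard_cayleyGraph_adj hS h1)]; norm_cast⟩

theorem isCayleyEigenvalue_ncard_inter_sub (hS : S = S⁻¹) (h1 : (1 : G) ∉ S) (H : Subgroup G)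
    (hH : (H : Set G) ≠ univ) {c : ℕ} (hc : c ≠ 0)
    (hout : ∀ x ∉ H, {y | y ∈ (H : Set G) ∧ y * x⁻¹ ∈ S}.ncard = c) :
    IsCayleyEigenvalue G ((S ∩ H).ncard - c) := by
  obtain ⟨v, hv, hAv⟩ := exists_eigenvector_of_regular_of_two_part _
    (ncard_cayleyGraph_adj hS h1) hH
    (fun x hx => ncard_mem_subgroup_cayleyGraph_adj hS h1 H hx)
    (fun x hx => by simpa only [cayleyGraph_adj_iff hS h1] using hout x hx) hc
  exact ⟨S, hS, h1, v, hv, by push_cast; exact hAv⟩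

end Cayley

section Subgroup

variable {G : Type*} [Group G] [Fintype G] {H : Subgroup G} {D T : Set G}

theorem isCayleyEigenvalue_ncard_sub (hH : (H : Set G) ≠ univ) (hDH : D ⊆ (H : Set G) \ {1})
    (hD : D⁻¹ = D) (hT : T⁻¹ = T) (hTH : Disjoint T H) {c : ℕ} (hc : c ≠ 0)
    (hout : ∀ x ∉ H, {y | y ∈ (H : Set G) ∧ y * x⁻¹ ∈ T}.ncard = c) :
    IsCayleyEigenvalue G (D.ncard - c) := by
  have h1 : (1 : G) ∉ D ∪ T := by
    rintro (h | h)
    · exact (hDH h).2 rfl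
    · exact hTH.notMem_of_mem_left h H.one_mem
  have hinter : (D ∪ T) ∩ H = D := by
    rw [union_inter_distrib_right, hTH.inter_eq, union_empty]
    exact inter_eq_left.2 fun y hy => (hDH hy).1
  have hout' : ∀ x ∉ H, {y | y ∈ (H : Set G) ∧ y * x⁻¹ ∈ D ∪ T}.ncard = c := by
    intro x hx
    rw [← hout x hx]
    congr 1
    ext y
    refine and_congr_right fun hy => or_iff_right fun hyD => hx ?_
    simpa using (H.mul_mem_cancel_left hy).1 (hDH hyD).1
  have := isCayleyEigenvalue_ncard_inter_sub (by rw [union_inv, hD, hT]) h1 H hH hc hout'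
  rwa [hinter] at this

theorem isCayleyEigenvalue_ncard_sub_ncard_add (hH : (H : Set G) ≠ univ)
    (hDH : D ⊆ (H : Set G) \ {1}) (hD : D⁻¹ = D) (hT : T⁻¹ = T) {c : ℕ}
    (hc : c < (H : Set G).ncard)
    (hout : ∀ x ∉ H, {y | y ∈ (H : Set G) ∧ y * x⁻¹ ∈ T}.ncard = c) :
    IsCayleyEigenvalue G (D.ncard - (H : Set G).ncard + c) := by
  have hout' : ∀ x ∉ H,
      {y | y ∈ (H : Set G) ∧ y * x⁻¹ ∈ (H : Set G)ᶜ \ T}.ncard = (H : Set G).ncard - c := by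
    intro x hx
    rw [← hout x hx, ← ncard_sdiff (fun y hy => hy.1)]
    congr 1
    ext y
    simp only [mem_ofPred_eq, mem_sdiff, mem_compl_iff, SetLike.mem_coe]
    refine ⟨fun ⟨hy, _, hyT⟩ => ⟨hy, fun h => hyT h.2⟩,
      fun ⟨hy, hyT⟩ => ⟨hy, fun hyx => hx ?_, fun h => hyT ⟨hy, h⟩⟩⟩
    simpa using (H.mul_mem_cancel_left hy).1 hyx
  have := isCayleyEigenvalue_ncard_sub hH hDH hD
    (by rw [sdiff_inv, compl_inv, inv_coe_set, hT]) (disjoint_compl_left.mono_left sdiff_subset)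
    (by omega) hout'
  convert this using 1
  omega

theorem IsRegularSetOf.exists_inv_eq_disjoint_ncard_eq_one
    (hpc : IsRegularSetOf (H : Set G) 0 1) :
    (H : Set G) ≠ univ ∧ ∃ T : Set G, T⁻¹ = T ∧ Disjoint T H ∧
      ∀ x ∉ H, {y | y ∈ (H : Set G) ∧ y * x⁻¹ ∈ T}.ncard = 1 := by
  obtain ⟨T, hT, h1, -, hH, hin, hout⟩ := hpc
  refine ⟨hH, T, hT.symm, ?_, fun x hx => ?_⟩
  · have := hin 1 H.one_mem
    rw [ncard_mem_subgroup_cayleyGraph_adj hT h1 H H.one_mem, ncard_eq_zero] at this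
    exact disjoint_iff_inter_eq_empty.2 this
  · simpa only [cayleyGraph_adj_iff hT h1] using hout x hx

end Subgroup

theorem statement_6_general {G : Type*} [Group G] [Fintype G]
    (H : Subgroup G) (hH : H ≠ ⊥)
    (hpc : IsRegularSetOf (H : Set G) 0 1) :
    ∀ ℓ : ℤ, -(Nat.card H : ℤ) ≤ ℓ → ℓ ≤ (Nat.card H : ℤ) - 1 →
      ∃ (S : Set G) (hS : S = S⁻¹), (1 : G) ∉ S ∧
        ∃ v : G → ℝ, v ≠ 0 ∧
          (adjMat (cayleyGraph S hS)).mulVec v = (ℓ : ℝ) • v := by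
  intro ℓ hℓ₀ hℓ₁
  obtain ⟨hHtop, T, hT, hTH, hTcount⟩ := hpc.exists_inv_eq_disjoint_ncard_eq_one
  have hm : Nat.card H = (H : Set G).ncard := Nat.card_coe_set_eq _
  have hm2 : 2 ≤ (H : Set G).ncard := hm ▸ (Subgroup.one_lt_card_iff_ne_bot H).2 hH
  have hA : ((H : Set G) \ {1})⁻¹ = (H : Set G) \ {1} := by
    rw [sdiff_inv, inv_coe_set, inv_singleton, inv_one]
  have hAcard : ((H : Set G) \ {1}).ncard = (H : Set G).ncard - 1 :=
    ncard_sdiff_singleton_of_mem H.one_mem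
  change IsCayleyEigenvalue G ℓ
  rcases le_or_gt 0 ℓ with hℓ | hℓ
  · obtain ⟨D, hDA, hD, hDcard | hDcard⟩ :=
      exists_subset_inv_eq_ncard_eq_or_eq_succ hA ℓ.toNat (by omega)
    · convert isCayleyEigenvalue_ncard hD.symm fun h => (hDA h).2 rfl
      omega
    · convert isCayleyEigenvalue_ncard_sub hHtop hDA hD hT hTH one_ne_zero hTcount using 1
      omega
  · obtain ⟨D, hDA, hD, hDcard | hDcard⟩ :=
      exists_subset_inv_eq_ncard_add_eq_or_succ hA (toFinite _) ((-ℓ).toNat - 1) (by omega)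
    · convert isCayleyEigenvalue_ncard_sub_ncard_add hHtop hDA hD inv_empty (c := 0)
        (by omega) (by simp) using 1
      omega
    · convert isCayleyEigenvalue_ncard_sub_ncard_add hHtop hDA hD hT (by omega) hTcount using 1
      omega

theorem statement_6 {G : Type*} [Group G] [Fintype G]
    (hG : IsGeneralizedDihedral G ∨
      (∃ p : ℕ, p.Prime ∧ Nat.card G = 4 * p) ∨
      (∃ p q : ℕ, p.Prime ∧ q.Prime ∧ Nat.card G = p * q))
    (H : Subgroup G) (hH : H ≠ ⊥)
    (hpc : IsRegularSetOf (H : Set G) 0 1) :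
    ∀ ℓ : ℤ, -(Nat.card H : ℤ) ≤ ℓ → ℓ ≤ (Nat.card H : ℤ) - 1 →
      ∃ (S : Set G) (hS : S = S⁻¹), (1 : G) ∉ S ∧
        ∃ v : G → ℝ, v ≠ 0 ∧
          (adjMat (cayleyGraph S hS)).mulVec v = (ℓ : ℝ) • v :=
  statement_6_general H hH hpc
end

section
/- Let G be a finite group, let H be a nontrivial subgroup of G whose order |H| is a prime, and let x ∈ G with HxH ≠ Hx⁻¹H. Then there exist |H| pairwise disjoint inverse-closed right transversals of H in HxH ∪ Hx⁻¹H. In particular, for any integer b with 0 ≤ b ≤ |H|, there exist b pairwise disjoint right transversals of H in HxH ∪ Hx⁻¹H whose union is inverse-closed. -/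
open scoped Pointwise

/-- The double coset `HxH = {h₁ * x * h₂ : h₁, h₂ ∈ H}`. -/
def doubleCoset {G : Type*} [Group G] (H : Subgroup G) (x : G) : Set G :=
  (H : Set G) * {x} * (H : Set G)

/-- For a subset `K` of `G` that is a union of right cosets of `H`, a right transversal of
`H` in `K` is a subset `T` of `K` containing exactly one element from each right coset of
`H` contained in `K`. -/
def IsRightTransversalIn {G : Type*} [Group G] (H : Subgroup G) (K T : Set G) : Prop :=
  T ⊆ K ∧ ∀ x ∈ K, ∃! t, t ∈ T ∧ t * x⁻¹ ∈ H

/-! The inverse of `HxH` is `Hx⁻¹H`, and the two are disjoint, so it suffices to find a set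
`T ⊆ HxH` that is a right transversal of `H` in `HxH` while `T⁻¹` is one in `Hx⁻¹H` (that is,
`T` is a common left and right transversal of `HxH`): then the sets `cT ∪ (cT)⁻¹`, `c ∈ H`, are
`|H|` pairwise disjoint inverse-closed right transversals of `H` in `HxH ∪ Hx⁻¹H`.
Since `|H|` is prime, `H ∩ x⁻¹Hx` is `H` or trivial. In the first case `x` normalises `H`,
`HxH = Hx`, and `T = {x}`. In the second, `T = {h x h : h ∈ H}` meets each right coset `Hxb` only
in `bxb` and each left coset `axH` only in `axa`. -/

namespace Subgroup

variable {G : Type*} [Group G] {H : Subgroup G}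

theorem mem_normalizer_or_conj_mem_eq_one (hp : (Nat.card H).Prime) (x : G) :
    x ∈ normalizer H ∨ ∀ h ∈ H, x * h * x⁻¹ ∈ H → h = 1 := by
  have : Finite H := Nat.finite_of_card_ne_zero hp.ne_zero
  have hSH : H ⊓ H.comap (MulAut.conj x).toMonoidHom ≤ H := inf_le_left
  rcases hp.eq_one_or_self_of_dvd _ (card_dvd_of_le hSH) with hS | hS
  · refine Or.inr fun h hh hxh => ?_
    have : h ∈ H ⊓ H.comap (MulAut.conj x).toMonoidHom := ⟨hh, hxh⟩
    rwa [card_eq_one.mp hS, mem_bot] at this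
  · have hHS : H ≤ H.comap (MulAut.conj x).toMonoidHom :=
      (eq_of_le_of_card_ge hSH hS.ge).ge.trans inf_le_right
    refine Or.inl (mem_normalizer_iff_map_conj_eq.mpr ?_)
    exact eq_of_le_of_card_ge (map_le_iff_le_comap.mpr hHS)
      (card_map_of_injective (MulAut.conj x).injective).ge

end Subgroup

namespace IsRightTransversalIn

variable {G : Type*} [Group G] {H : Subgroup G} {K K₁ K₂ T T₁ T₂ : Set G}

theorem union (h₁ : IsRightTransversalIn H K₁ T₁) (h₂ : IsRightTransversalIn H K₂ T₂)
    (hK₂ : (H : Set G) * K₂ ⊆ K₂) (hK : Disjoint K₁ K₂) :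
    IsRightTransversalIn H (K₁ ∪ K₂) (T₁ ∪ T₂) := by
  have apart : ∀ {a b}, a ∈ K₁ → b ∈ K₂ → a * b⁻¹ ∉ H := fun ha hb hab =>
    hK.ne_of_mem ha (hK₂ (by simpa using Set.mul_mem_mul hab hb)) rfl
  refine ⟨Set.union_subset_union h₁.1 h₂.1, ?_⟩
  rintro y (hy | hy)
  · obtain ⟨t, ht, huniq⟩ := h₁.2 y hy
    refine ⟨t, ⟨Or.inl ht.1, ht.2⟩, ?_⟩
    rintro s ⟨hs | hs, hsy⟩
    · exact huniq s ⟨hs, hsy⟩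
    · exact absurd (by simpa using inv_mem hsy) (apart hy (h₂.1 hs))
  · obtain ⟨t, ht, huniq⟩ := h₂.2 y hy
    refine ⟨t, ⟨Or.inr ht.1, ht.2⟩, ?_⟩
    rintro s ⟨hs | hs, hsy⟩
    · exact absurd hsy (apart (h₁.1 hs) hy)
    · exact huniq s ⟨hs, hsy⟩

theorem singleton_mul (hT : IsRightTransversalIn H K T) (hK : (H : Set G) * K ⊆ K) {c : G}
    (hc : c ∈ H) : IsRightTransversalIn H K ({c} * T) := by
  rw [Set.singleton_mul]
  refine ⟨?_, fun y hy => ?_⟩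
  · rintro _ ⟨t, ht, rfl⟩
    exact hK (Set.mul_mem_mul hc (hT.1 ht))
  obtain ⟨t, ⟨ht, hty⟩, huniq⟩ := hT.2 y hy
  refine ⟨c * t, ⟨⟨t, ht, rfl⟩, by simpa [mul_assoc] using mul_mem hc hty⟩, ?_⟩
  rintro _ ⟨⟨s, hs, rfl⟩, hsy⟩
  rw [huniq s ⟨hs, by simpa [mul_assoc] using mul_mem (inv_mem hc) hsy⟩]

theorem mul_singleton (hT : IsRightTransversalIn H K T) (hK : K * H ⊆ K) {c : G}
    (hc : c ∈ H) : IsRightTransversalIn H K (T * {c}) := by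
  rw [Set.mul_singleton]
  refine ⟨?_, fun y hy => ?_⟩
  · rintro _ ⟨t, ht, rfl⟩
    exact hK (Set.mul_mem_mul (hT.1 ht) hc)
  obtain ⟨t, ⟨ht, hty⟩, huniq⟩ := hT.2 (y * c⁻¹) (hK (Set.mul_mem_mul hy (inv_mem hc)))
  refine ⟨t * c, ⟨⟨t, ht, rfl⟩, by simpa [mul_assoc] using hty⟩, ?_⟩
  rintro _ ⟨⟨s, hs, rfl⟩, hsy⟩
  rw [huniq s ⟨hs, by simpa [mul_assoc] using hsy⟩]

theorem disjoint_singleton_mul (hT : IsRightTransversalIn H K T) {c c' : G} (hc : c ∈ H)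
    (hc' : c' ∈ H) (hne : c ≠ c') : Disjoint ({c} * T) ({c'} * T) := by
  rw [Set.singleton_mul, Set.singleton_mul, Set.disjoint_left]
  rintro _ ⟨t, ht, rfl⟩ ⟨t', ht', heq⟩
  replace heq : c' * t' = c * t := heq
  have hmem : t' * t⁻¹ ∈ H := by
    rw [show t' * t⁻¹ = c'⁻¹ * (c' * t') * t⁻¹ by group, heq]
    simpa [mul_assoc] using mul_mem (inv_mem hc') hc
  obtain rfl : t' = t := (hT.2 t (hT.1 ht)).unique ⟨ht', hmem⟩ ⟨ht, by simp [one_mem]⟩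
  exact hne (mul_right_cancel heq).symm

end IsRightTransversalIn

section Transversals

variable {G : Type*} [Group G] {H : Subgroup G}

theorem exists_inv_closed_transversals {D T : Set G} (hHD : (H : Set G) * D ⊆ D)
    (hDH : D * H ⊆ D) (hD : Disjoint D D⁻¹) (hT : IsRightTransversalIn H D T)
    (hT' : IsRightTransversalIn H D⁻¹ T⁻¹) :
    ∃ R : H → Set G, (∀ c, IsRightTransversalIn H (D ∪ D⁻¹) (R c)) ∧ (∀ c, R c = (R c)⁻¹) ∧
      Pairwise fun c c' => Disjoint (R c) (R c') := by
  have hHD' : (H : Set G) * D⁻¹ ⊆ D⁻¹ := by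
    simpa [mul_inv_rev, inv_coe_set] using Set.inv_subset_inv.mpr hDH
  have hDH' : D⁻¹ * H ⊆ D⁻¹ := by
    simpa [mul_inv_rev, inv_coe_set] using Set.inv_subset_inv.mpr hHD
  have hsub : ∀ c : H, {(c : G)} * T ⊆ D := fun c => (hT.singleton_mul hHD c.2).1
  refine ⟨fun c => {(c : G)} * T ∪ ({(c : G)} * T)⁻¹, fun c => ?_, fun c => ?_, fun c c' hcc' => ?_⟩
  · refine (hT.singleton_mul hHD c.2).union ?_ hHD' hD
    rw [mul_inv_rev, Set.inv_singleton]
    exact hT'.mul_singleton hDH' (inv_mem c.2)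
  · rw [Set.union_inv, inv_inv, Set.union_comm]
  · have hdisj := hT.disjoint_singleton_mul c.2 c'.2 (Subtype.coe_injective.ne hcc')
    refine Disjoint.union_left (Disjoint.union_right hdisj ?_) (Disjoint.union_right ?_ ?_)
    · exact hD.mono (hsub c) (Set.inv_subset_inv.mpr (hsub c'))
    · exact hD.symm.mono (Set.inv_subset_inv.mpr (hsub c)) (hsub c')
    · exact hdisj.preimage _

theorem mem_doubleCoset {x y : G} :
    y ∈ doubleCoset H x ↔ ∃ a ∈ H, ∃ b ∈ H, y = a * x * b :=
  DoubleCoset.mem_doubleCoset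

theorem doubleCoset_inv (x : G) : (doubleCoset H x)⁻¹ = doubleCoset H x⁻¹ := by
  rw [doubleCoset, doubleCoset, mul_inv_rev, mul_inv_rev, Set.inv_singleton, inv_coe_set,
    mul_assoc]

theorem coe_mul_doubleCoset (x : G) : (H : Set G) * doubleCoset H x = doubleCoset H x := by
  rw [doubleCoset, ← mul_assoc, ← mul_assoc, coe_mul_coe]

theorem doubleCoset_mul_coe (x : G) : doubleCoset H x * H = doubleCoset H x := by
  rw [doubleCoset, mul_assoc, coe_mul_coe]

theorem disjoint_doubleCoset_inv {x : G} (h : doubleCoset H x ≠ doubleCoset H x⁻¹) :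
    Disjoint (doubleCoset H x) (doubleCoset H x)⁻¹ := by
  rw [doubleCoset_inv]
  by_contra hx
  exact h (DoubleCoset.eq_of_not_disjoint hx)

theorem isRightTransversalIn_doubleCoset_singleton {x : G} (hx : x ∈ Subgroup.normalizer H) :
    IsRightTransversalIn H (doubleCoset H x) {x} := by
  refine ⟨Set.singleton_subset_iff.mpr (mem_doubleCoset.mpr ⟨1, one_mem H, 1, one_mem H, by simp⟩),
    fun y hy => ?_⟩
  obtain ⟨a, ha, b, hb, rfl⟩ := mem_doubleCoset.mp hy
  refine ⟨x, ⟨rfl, ?_⟩, fun t ht => ht.1⟩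
  simpa [mul_assoc] using
    mul_mem ((Subgroup.mem_normalizer_iff.mp hx _).mp (inv_mem hb)) (inv_mem ha)

theorem isRightTransversalIn_doubleCoset_range {x : G}
    (hx : ∀ h ∈ H, x * h * x⁻¹ ∈ H → h = 1) :
    IsRightTransversalIn H (doubleCoset H x) (Set.range fun h : H => (h : G) * x * h) := by
  refine ⟨?_, fun y hy => ?_⟩
  · rintro _ ⟨h, rfl⟩
    exact mem_doubleCoset.mpr ⟨h, h.2, h, h.2, rfl⟩
  obtain ⟨a, ha, b, hb, rfl⟩ := mem_doubleCoset.mp hy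
  refine ⟨b * x * b, ⟨⟨⟨b, hb⟩, rfl⟩, by simpa [mul_assoc] using mul_mem hb (inv_mem ha)⟩, ?_⟩
  rintro _ ⟨⟨h, rfl⟩, hy⟩
  have hconj : x * (h * b⁻¹) * x⁻¹ ∈ H := by
    convert mul_mem (mul_mem (inv_mem h.2) hy) ha using 1
    group
  show (h : G) * x * h = b * x * b
  rw [mul_inv_eq_one.mp (hx _ (mul_mem h.2 (inv_mem hb)) hconj)]

theorem exists_isRightTransversalIn_doubleCoset_and_inv (hp : (Nat.card H).Prime) (x : G) :
    ∃ T, IsRightTransversalIn H (doubleCoset H x) T ∧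
      IsRightTransversalIn H (doubleCoset H x)⁻¹ T⁻¹ := by
  rw [doubleCoset_inv]
  rcases Subgroup.mem_normalizer_or_conj_mem_eq_one hp x with hx | hx
  · refine ⟨{x}, isRightTransversalIn_doubleCoset_singleton hx, ?_⟩
    rw [Set.inv_singleton]
    exact isRightTransversalIn_doubleCoset_singleton (inv_mem hx)
  · have hx' : ∀ h ∈ H, x⁻¹ * h * x⁻¹⁻¹ ∈ H → h = 1 := fun h hh hxh => by
      rw [← conj_eq_one_iff (a := x⁻¹), inv_inv]
      exact hx _ (by simpa using hxh) (by simpa [mul_assoc] using hh)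
    have hinv : (Set.range fun h : H => (h : G) * x * h)⁻¹ =
        Set.range fun h : H => (h : G) * x⁻¹ * h := by
      ext y
      simp only [Set.mem_inv, Set.mem_range]
      constructor <;> rintro ⟨h, hh⟩ <;> refine ⟨h⁻¹, ?_⟩
      · rw [← inv_inv y, ← hh]; simp [mul_assoc]
      · rw [← hh]; simp [mul_assoc]
    exact ⟨_, isRightTransversalIn_doubleCoset_range hx,
      hinv ▸ isRightTransversalIn_doubleCoset_range hx'⟩

end Transversals

theorem statement_14_general {G : Type*} [Group G] (H : Subgroup G)
    (hp : (Nat.card H).Prime) (x : G)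
    (h1 : doubleCoset H x ≠ doubleCoset H x⁻¹) :
    (∃ R : Fin (Nat.card H) → Set G,
      (∀ i, IsRightTransversalIn H (doubleCoset H x ∪ doubleCoset H x⁻¹) (R i)) ∧
      (∀ i, R i = (R i)⁻¹) ∧
      (∀ i j, i ≠ j → Disjoint (R i) (R j))) ∧
    ∀ b : ℕ, b ≤ Nat.card H →
      ∃ R : Fin b → Set G,
        (∀ i, IsRightTransversalIn H (doubleCoset H x ∪ doubleCoset H x⁻¹) (R i)) ∧
        (∀ i j, i ≠ j → Disjoint (R i) (R j)) ∧
        (⋃ i, R i) = (⋃ i, R i)⁻¹ := by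
  have : Finite H := Nat.finite_of_card_ne_zero hp.ne_zero
  obtain ⟨T, hT, hT'⟩ := exists_isRightTransversalIn_doubleCoset_and_inv hp x
  obtain ⟨R, hR, hRinv, hRdisj⟩ := exists_inv_closed_transversals
    (coe_mul_doubleCoset x).le (doubleCoset_mul_coe x).le (disjoint_doubleCoset_inv h1) hT hT'
  rw [doubleCoset_inv] at hR
  let e : Fin (Nat.card H) ≃ H := (Finite.equivFin H).symm
  refine ⟨⟨R ∘ e, fun i => hR _, fun i => hRinv _, fun i j hij => hRdisj (e.injective.ne hij)⟩,
    fun b hb => ⟨R ∘ e ∘ Fin.castLE hb, fun i => hR _,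
      fun i j hij => hRdisj (e.injective.ne ((Fin.castLE_injective hb).ne hij)), ?_⟩⟩
  rw [Set.iUnion_inv]
  exact Set.iUnion_congr fun i => hRinv _

theorem statement_14 {G : Type*} [Group G] [Fintype G] (H : Subgroup G)
    (hH : H ≠ ⊥) (hp : (Nat.card H).Prime) (x : G)
    (h1 : doubleCoset H x ≠ doubleCoset H x⁻¹) :
    (∃ R : Fin (Nat.card H) → Set G,
      (∀ i, IsRightTransversalIn H (doubleCoset H x ∪ doubleCoset H x⁻¹) (R i)) ∧
      (∀ i, R i = (R i)⁻¹) ∧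
      (∀ i j, i ≠ j → Disjoint (R i) (R j))) ∧
    ∀ b : ℕ, b ≤ Nat.card H →
      ∃ R : Fin b → Set G,
        (∀ i, IsRightTransversalIn H (doubleCoset H x ∪ doubleCoset H x⁻¹) (R i)) ∧
        (∀ i j, i ≠ j → Disjoint (R i) (R j)) ∧
        (⋃ i, R i) = (⋃ i, R i)⁻¹ :=
  statement_14_general H hp x h1
end

section
/- Let G be a finite group, let H be a subgroup of G with |H| = m odd, and let x ∈ G∖H. Suppose that HxH = Hx⁻¹H, |HxH|/|H| = m, and HxH contains an involution. Then there exist |H| pairwise disjoint inverse-closed right transversals of H in HxH. In particular, for any integer b with 0 ≤ b ≤ |H|, there exist b pairwise disjoint right transversals of H in HxH whose union is inverse-closed. -/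
/-!
Since `HxH` contains an involution `t`, it equals `HtH`, and `|HtH| = |H|²` means that every
element of it is `a * t * b` for a unique pair `(a, b) ∈ H × H`; the right coset of `a * t * b`
is determined by `b`. For `c ∈ H` the set `T_c = {c⁻¹ h c⁻¹ t h : h ∈ H}` therefore meets every
right coset exactly once, and it is inverse-closed because `(c⁻¹ h c⁻¹ t h)⁻¹ = c⁻¹ k c⁻¹ t k`
with `k = c h⁻¹ c`. Two of these sets meet only if `c⁻¹ h c⁻¹ = d⁻¹ h d⁻¹` for some `h`, i.e.
`(c⁻¹ h)² = (d⁻¹ h)²`, which forces `c = d` because squaring is a bijection of a group of odd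
order.
-/

open scoped Pointwise

section

variable {G : Type*} [Group G] (H : Subgroup G)

theorem doubleCoset_eq_image_prod (z : G) :
    doubleCoset H z = (fun p : G × G => p.1 * z * p.2) '' ((H : Set G) ×ˢ (H : Set G)) :=
  (DoubleCoset.doubleCoset_eq_image2 z H H).trans (Set.image_prod _).symm

theorem injOn_of_card_sq_le_ncard_doubleCoset [Finite H] {z : G}
    (h : Nat.card H * Nat.card H ≤ (doubleCoset H z).ncard) :
    Set.InjOn (fun p : G × G => p.1 * z * p.2) ((H : Set G) ×ˢ (H : Set G)) := by
  rw [doubleCoset_eq_image_prod] at h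
  have hprod : ((H : Set G) ×ˢ (H : Set G)).ncard = Nat.card H * Nat.card H := by
    rw [Set.ncard_prod, ← Nat.card_coe_set_eq]; rfl
  exact Set.injOn_of_ncard_image_eq (le_antisymm Set.ncard_image_le (hprod.le.trans h))

variable {H}

theorem inv_mul_mul_inv_mem {c h : G} (hc : c ∈ H) (hh : h ∈ H) : c⁻¹ * h * c⁻¹ ∈ H :=
  H.mul_mem (H.mul_mem (H.inv_mem hc) hh) (H.inv_mem hc)

theorem eq_of_inv_mul_mul_inv_eq (hodd : Odd (Nat.card H)) {c d h : G}
    (hc : c ∈ H) (hd : d ∈ H) (hh : h ∈ H) (heq : c⁻¹ * h * c⁻¹ = d⁻¹ * h * d⁻¹) : c = d := by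
  have hsq : (⟨c⁻¹ * h, H.mul_mem (H.inv_mem hc) hh⟩ : H) ^ 2 =
      (⟨d⁻¹ * h, H.mul_mem (H.inv_mem hd) hh⟩ : H) ^ 2 := by
    ext
    simp only [pow_two, Subgroup.coe_mul]
    rw [← mul_assoc, heq, mul_assoc]
  simpa using congrArg Subtype.val (hodd.coprime_two_right.pow_left_bijective.1 hsq)

variable {t : G}

theorem eq_of_mul_mul_eq
    (hinj : Set.InjOn (fun p : G × G => p.1 * t * p.2) ((H : Set G) ×ˢ (H : Set G)))
    {a b a' b' : G} (ha : a ∈ H) (hb : b ∈ H) (ha' : a' ∈ H) (hb' : b' ∈ H)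
    (heq : a * t * b = a' * t * b') : a = a' ∧ b = b' :=
  Prod.ext_iff.1 (hinj (x₁ := (a, b)) (x₂ := (a', b')) ⟨ha, hb⟩ ⟨ha', hb'⟩ heq)

theorem right_eq_of_mul_inv_mem
    (hinj : Set.InjOn (fun p : G × G => p.1 * t * p.2) ((H : Set G) ×ˢ (H : Set G)))
    {a b a' b' : G} (ha : a ∈ H) (hb : b ∈ H) (ha' : a' ∈ H) (hb' : b' ∈ H)
    (hmem : a * t * b * (a' * t * b')⁻¹ ∈ H) : b = b' := by
  refine (eq_of_mul_mul_eq hinj ha hb (H.mul_mem hmem ha') hb' ?_).2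
  simp [mul_assoc]

variable (H t) in
def symmTransversal (c : G) : Set G :=
  (fun h => c⁻¹ * h * c⁻¹ * t * h) '' H

variable {c : G}

theorem symmTransversal_subset (hc : c ∈ H) : symmTransversal H t c ⊆ doubleCoset H t := by
  rintro _ ⟨h, hh, rfl⟩
  exact DoubleCoset.mem_doubleCoset.2 ⟨_, inv_mul_mul_inv_mem hc hh, h, hh, rfl⟩

theorem isRightTransversalIn_symmTransversal
    (hinj : Set.InjOn (fun p : G × G => p.1 * t * p.2) ((H : Set G) ×ˢ (H : Set G)))
    (hc : c ∈ H) : IsRightTransversalIn H (doubleCoset H t) (symmTransversal H t c) := by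
  refine ⟨symmTransversal_subset hc, fun y hy => ?_⟩
  obtain ⟨a, ha, b, hb, rfl⟩ := DoubleCoset.mem_doubleCoset.1 hy
  refine ⟨c⁻¹ * b * c⁻¹ * t * b, ⟨⟨b, hb, rfl⟩, ?_⟩, ?_⟩
  · have hquot : c⁻¹ * b * c⁻¹ * t * b * (a * t * b)⁻¹ = c⁻¹ * b * c⁻¹ * a⁻¹ := by group
    rw [hquot]
    exact H.mul_mem (inv_mul_mul_inv_mem hc hb) (H.inv_mem ha)
  · rintro _ ⟨⟨h, hh, rfl⟩, hmem⟩
    rw [right_eq_of_mul_inv_mem hinj (inv_mul_mul_inv_mem hc hh) hh ha hb hmem]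

theorem inv_symmTransversal (ht : t⁻¹ = t) (hc : c ∈ H) :
    (symmTransversal H t c)⁻¹ = symmTransversal H t c := by
  have hsub : (symmTransversal H t c)⁻¹ ⊆ symmTransversal H t c := by
    intro g hg
    obtain ⟨h, hh, hg⟩ := Set.mem_inv.1 hg
    refine ⟨c * h⁻¹ * c, H.mul_mem (H.mul_mem hc (H.inv_mem hh)) hc, ?_⟩
    calc c⁻¹ * (c * h⁻¹ * c) * c⁻¹ * t * (c * h⁻¹ * c) = h⁻¹ * t⁻¹ * c * h⁻¹ * c := by
          rw [ht]; group
      _ = g := by rw [← inv_inv g, ← hg]; group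
  exact hsub.antisymm (Set.inv_subset.1 hsub)

theorem disjoint_symmTransversal
    (hinj : Set.InjOn (fun p : G × G => p.1 * t * p.2) ((H : Set G) ×ˢ (H : Set G)))
    (hodd : Odd (Nat.card H)) {d : G} (hc : c ∈ H) (hd : d ∈ H) (hcd : c ≠ d) :
    Disjoint (symmTransversal H t c) (symmTransversal H t d) := by
  rw [Set.disjoint_left]
  rintro _ ⟨h, hh, rfl⟩ ⟨h', hh', heq⟩
  obtain ⟨hcoef, rfl⟩ :=
    eq_of_mul_mul_eq hinj (inv_mul_mul_inv_mem hd hh') hh' (inv_mul_mul_inv_mem hc hh) hh heq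
  exact hcd (eq_of_inv_mul_mul_inv_eq hodd hc hd hh' hcoef.symm)

end

theorem statement_17_general {G : Type*} [Group G] [Fintype G] (H : Subgroup G)
    (hodd : Odd (Nat.card H)) (x : G)
    (h2 : (doubleCoset H x).ncard / Nat.card H = Nat.card H)
    (h3 : ∃ t ∈ doubleCoset H x, orderOf t = 2) :
    (∃ R : Fin (Nat.card H) → Set G,
      (∀ i, IsRightTransversalIn H (doubleCoset H x) (R i)) ∧
      (∀ i, R i = (R i)⁻¹) ∧
      (∀ i j, i ≠ j → Disjoint (R i) (R j))) ∧
    ∀ b : ℕ, b ≤ Nat.card H →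
      ∃ R : Fin b → Set G,
        (∀ i, IsRightTransversalIn H (doubleCoset H x) (R i)) ∧
        (∀ i j, i ≠ j → Disjoint (R i) (R j)) ∧
        (⋃ i, R i) = (⋃ i, R i)⁻¹ := by
  obtain ⟨t, htK, ht⟩ := h3
  have hK : doubleCoset H x = doubleCoset H t := (DoubleCoset.doubleCoset_eq_of_mem htK).symm
  rw [hK] at h2 ⊢
  have hinj := injOn_of_card_sq_le_ncard_doubleCoset H
    ((Nat.le_div_iff_mul_le Nat.card_pos).1 h2.ge)
  let c : Fin (Nat.card H) → H := (Finite.equivFin H).symm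
  let R i := symmTransversal H t (c i)
  have hR_trans i : IsRightTransversalIn H (doubleCoset H t) (R i) :=
    isRightTransversalIn_symmTransversal hinj (c i).2
  have hR_inv i : R i = (R i)⁻¹ :=
    (inv_symmTransversal (inv_eq_self_of_orderOf_eq_two ht) (c i).2).symm
  have hR_disj i j (hij : i ≠ j) : Disjoint (R i) (R j) :=
    disjoint_symmTransversal hinj hodd (c i).2 (c j).2 (Subtype.coe_injective.ne
      ((Finite.equivFin H).symm.injective.ne hij))
  refine ⟨⟨R, hR_trans, hR_inv, hR_disj⟩, fun b hb => ⟨R ∘ Fin.castLE hb, fun i => hR_trans _,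
    fun i j hij => hR_disj _ _ ((Fin.castLE_injective hb).ne hij), ?_⟩⟩
  rw [Set.iUnion_inv]
  exact Set.iUnion_congr fun i => hR_inv _

theorem statement_17 {G : Type*} [Group G] [Fintype G] (H : Subgroup G)
    (hodd : Odd (Nat.card H)) (x : G) (hx : x ∉ H)
    (h1 : doubleCoset H x = doubleCoset H x⁻¹)
    (h2 : (doubleCoset H x).ncard / Nat.card H = Nat.card H)
    (h3 : ∃ t ∈ doubleCoset H x, orderOf t = 2) :
    (∃ R : Fin (Nat.card H) → Set G,
      (∀ i, IsRightTransversalIn H (doubleCoset H x) (R i)) ∧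
      (∀ i, R i = (R i)⁻¹) ∧
      (∀ i j, i ≠ j → Disjoint (R i) (R j))) ∧
    ∀ b : ℕ, b ≤ Nat.card H →
      ∃ R : Fin b → Set G,
        (∀ i, IsRightTransversalIn H (doubleCoset H x) (R i)) ∧
        (∀ i j, i ≠ j → Disjoint (R i) (R j)) ∧
        (⋃ i, R i) = (⋃ i, R i)⁻¹ :=
  statement_17_general H hodd x h2 h3
end

section
/- Let G be a finite group of order 4p, where p is a prime, let H be a nontrivial subgroup of G, and let x ∈ G. If HxH ≠ Hx⁻¹H, then for any integer b with 0 ≤ b ≤ |H|, there exist b pairwise disjoint right transversals of H in HxH ∪ Hx⁻¹H whose union is inverse-closed. -/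
open scoped Pointwise

/-!
Write `D = HxH`. Inside `D` the left cosets `gH` and the right cosets `Hg` form two partitions
with the same number `m` of blocks, and every left coset meets every right coset of `D` in the
same number `c` of elements (all such intersections are translates of `xH ∩ Hx`), so that
`|H| = m c`. Identifying both partitions with `Fin m`, a Latin square on `Fin m` produces
`|H|` pairwise disjoint subsets of `D` that are transversals of the left and of the right cosets
at the same time. For such a set `A`, `A` is a right transversal of `H` in `HxH` and `A⁻¹` one in
`Hx⁻¹H`; since these two double cosets are distinct, hence disjoint, `A ∪ A⁻¹` is a right
transversal in their union, and it is inverse-closed.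
-/

open Set Function MulOpposite

theorem exists_equiv_prod_fin_of_card_fiber {D β : Type*} [Finite D] (f : D → β) {n : ℕ}
    (hf : ∀ y, Nat.card {d // f d = y} = n) : ∃ e : D ≃ β × Fin n, ∀ d, (e d).1 = f d :=
  ⟨(Equiv.sigmaFiberEquiv f).symm.trans <|
      (Equiv.sigmaCongrRight fun y => Finite.equivFinOfCardEq (hf y)).trans <|
        Equiv.sigmaEquivProd β (Fin n),
    fun _ => rfl⟩

theorem Nat.card_eq_mul_of_card_fiber {D β : Type*} [Finite D] (f : D → β) {n : ℕ}
    (hf : ∀ y, Nat.card {d // f d = y} = n) : Nat.card D = Nat.card β * n := by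
  obtain ⟨e, -⟩ := exists_equiv_prod_fin_of_card_fiber f hf
  rw [Nat.card_congr e, Nat.card_prod, Nat.card_eq_fintype_card (α := Fin n), Fintype.card_fin]

theorem bijOn_range_of_bijective_comp {α β γ : Type*} {f : β → γ} {g : α → β}
    (h : Bijective (f ∘ g)) : BijOn f (range g) univ := by
  rw [← image_univ, ← bijOn_comp_iff (h.injective.of_comp).injOn]
  exact h.bijOn_univ

theorem exists_pairwise_disjoint_bijOn_bijOn {D I J : Type*} [Finite D] (l : D → I) (r : D → J)
    {c : ℕ} (hIJ : Nat.card I = Nat.card J)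
    (hc : ∀ p : I × J, Nat.card {d // (l d, r d) = p} = c) {b : ℕ}
    (hb : b ≤ Nat.card I * c) :
    ∃ A : Fin b → Set D,
      Pairwise (Disjoint on A) ∧ ∀ k, BijOn l (A k) univ ∧ BijOn r (A k) univ := by
  set m := Nat.card I
  rcases Nat.eq_zero_or_pos m with hm | hm
  · obtain rfl : b = 0 := by simpa [hm] using hb
    exact ⟨Fin.elim0, fun k => k.elim0, fun k => k.elim0⟩
  have : NeZero m := ⟨hm.ne'⟩
  have : Finite I := Nat.finite_of_card_ne_zero hm.ne'
  have : Finite J := Nat.finite_of_card_ne_zero (hIJ ▸ hm.ne')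
  let eI : I ≃ Fin m := Finite.equivFinOfCardEq rfl
  let eJ : J ≃ Fin m := Finite.equivFinOfCardEq hIJ.symm
  obtain ⟨Φ, hΦ⟩ := exists_equiv_prod_fin_of_card_fiber (fun d => (l d, r d)) hc
  let shift : Fin b ↪ Fin m × Fin c := (Fin.castLEEmb hb).trans finProdFinEquiv.symm.toEmbedding
  -- Latin square: in row `i`, the `k`-th set takes the element number `(shift k).2` of the
  -- cell in column `i + (shift k).1`.
  let σ (k : Fin b) (i : Fin m) : D :=
    Φ.symm ((eI.symm i, eJ.symm (i + (shift k).1)), (shift k).2)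
  have hσ (k : Fin b) (i : Fin m) :
      (l (σ k i), r (σ k i)) = (eI.symm i, eJ.symm (i + (shift k).1)) := by
    rw [← hΦ, Equiv.apply_symm_apply]
  refine ⟨fun k => range (σ k), fun k k' hkk' => ?_, fun k => ⟨?_, ?_⟩⟩
  · refine disjoint_range_iff.2 fun i i' hii' => hkk' (shift.injective ?_)
    have h := congrArg Φ hii'
    simp only [σ, Equiv.apply_symm_apply, Prod.mk.injEq, EmbeddingLike.apply_eq_iff_eq] at h
    obtain ⟨⟨rfl, h⟩, hq⟩ := h
    exact Prod.ext (add_left_cancel h) hq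
  · refine bijOn_range_of_bijective_comp ?_
    have : l ∘ σ k = eI.symm := funext fun i => congrArg Prod.fst (hσ k i)
    rw [this]; exact eI.symm.bijective
  · refine bijOn_range_of_bijective_comp ?_
    have : r ∘ σ k = eJ.symm ∘ (Equiv.addRight (shift k).1) :=
      funext fun i => congrArg Prod.snd (hσ k i)
    rw [this]; exact eJ.symm.bijective.comp (Equiv.bijective _)

theorem exists_pairwise_disjoint_bijOn_bijOn_of_card_fiber {D I J : Type*} [Finite D]
    [Nonempty D] (l : D → I) (r : D → J) {n c : ℕ} (hl : ∀ i, Nat.card {d // l d = i} = n)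
    (hr : ∀ j, Nat.card {d // r d = j} = n)
    (hc : ∀ p : I × J, Nat.card {d // (l d, r d) = p} = c) {b : ℕ} (hb : b ≤ n) :
    ∃ A : Fin b → Set D,
      Pairwise (Disjoint on A) ∧ ∀ k, BijOn l (A k) univ ∧ BijOn r (A k) univ := by
  have hDI := Nat.card_eq_mul_of_card_fiber l hl
  have hDJ := Nat.card_eq_mul_of_card_fiber r hr
  have hDIJ := Nat.card_eq_mul_of_card_fiber (fun d => (l d, r d)) hc
  rw [Nat.card_prod] at hDIJ
  have hD : 0 < Nat.card D := Nat.card_pos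
  have hn : n ≠ 0 := by rintro rfl; simp at hDI; omega
  have hI : Nat.card I ≠ 0 := by rintro h; simp [h] at hDI; omega
  have hIJ : Nat.card I = Nat.card J :=
    Nat.eq_of_mul_eq_mul_right (Nat.pos_of_ne_zero hn) (hDI.symm.trans hDJ)
  have hnc : n = Nat.card I * c := by
    rw [hDI, ← hIJ, mul_assoc] at hDIJ
    rw [Nat.eq_of_mul_eq_mul_left (Nat.pos_of_ne_zero hI) hDIJ, hIJ]
  exact exists_pairwise_disjoint_bijOn_bijOn l r hIJ hc (hnc ▸ hb)

theorem natCard_subtype_eq_of_subset {α : Type*} {D S : Set α} (hS : S ⊆ D) {P : D → Prop}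
    (hP : ∀ d, P d ↔ (d : α) ∈ S) : Nat.card {d // P d} = Nat.card S :=
  Nat.card_congr <| (Equiv.subtypeEquivRight hP).trans (Equiv.subtypeSubtypeEquivSubtype (hS ·))

section CosetsIn

variable {G : Type*} [Group G] (H : Subgroup G) (D : Set G)

/- The cosets of `H` meeting `D`, as quotients of `D` itself rather than of `G`, so that every
fibre is nonempty. -/
def leftCosetIn (d : D) : Quotient ((QuotientGroup.leftRel H).comap ((↑) : D → G)) :=
  Quotient.mk _ d

def rightCosetIn (d : D) : Quotient ((QuotientGroup.rightRel H).comap ((↑) : D → G)) :=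
  Quotient.mk _ d

variable {H D}

theorem leftCosetIn_eq_iff {a b : D} :
    leftCosetIn H D a = leftCosetIn H D b ↔ (a : G)⁻¹ * b ∈ H := by
  rw [leftCosetIn, leftCosetIn, Quotient.eq, Setoid.comap_rel, QuotientGroup.leftRel_apply]

theorem rightCosetIn_eq_iff {a b : D} :
    rightCosetIn H D a = rightCosetIn H D b ↔ (b : G) * (a : G)⁻¹ ∈ H := by
  rw [rightCosetIn, rightCosetIn, Quotient.eq, Setoid.comap_rel, QuotientGroup.rightRel_apply]

theorem natCard_leftCosetIn_fiber (hD : ∀ g ∈ D, g • (H : Set G) ⊆ D) (i) :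
    Nat.card {d // leftCosetIn H D d = i} = Nat.card H := by
  induction i using Quotient.ind with | _ g
  calc Nat.card {d // leftCosetIn H D d = leftCosetIn H D g}
      = Nat.card ↥((g : G) • (H : Set G)) :=
        natCard_subtype_eq_of_subset (hD g g.2) fun d => by
          rw [eq_comm, leftCosetIn_eq_iff, mem_leftCoset_iff, SetLike.mem_coe]
    _ = Nat.card H := natCard_smul_set _ _

theorem natCard_rightCosetIn_fiber (hD : ∀ g ∈ D, op g • (H : Set G) ⊆ D) (j) :
    Nat.card {d // rightCosetIn H D d = j} = Nat.card H := by
  induction j using Quotient.ind with | _ g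
  calc Nat.card {d // rightCosetIn H D d = rightCosetIn H D g}
      = Nat.card ↥(op (g : G) • (H : Set G)) :=
        natCard_subtype_eq_of_subset (hD g g.2) fun d => by
          rw [eq_comm, rightCosetIn_eq_iff, mem_rightCoset_iff, SetLike.mem_coe]
    _ = Nat.card H := natCard_smul_set _ _

theorem natCard_cosetsIn_fiber (hD : ∀ g ∈ D, g • (H : Set G) ⊆ D) (a b : D) :
    Nat.card {d // (leftCosetIn H D d, rightCosetIn H D d) =
        (leftCosetIn H D a, rightCosetIn H D b)} =
      Nat.card ↥((a : G) • (H : Set G) ∩ op (b : G) • (H : Set G)) :=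
  natCard_subtype_eq_of_subset (inter_subset_left.trans (hD a a.2)) fun d => by
    rw [Prod.mk.injEq, eq_comm, leftCosetIn_eq_iff, eq_comm (a := rightCosetIn H D d),
      rightCosetIn_eq_iff, mem_inter_iff, mem_leftCoset_iff, mem_rightCoset_iff]
    rfl

theorem isRightTransversalIn_of_bijOn_rightCosetIn {A : Set D}
    (hA : BijOn (rightCosetIn H D) A univ) : IsRightTransversalIn H D ((↑) '' A) := by
  refine ⟨Subtype.coe_image_subset D A, fun y hy => ?_⟩
  obtain ⟨a, haA, ha⟩ := hA.surjOn (mem_univ (rightCosetIn H D ⟨y, hy⟩))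
  refine ⟨a, ⟨mem_image_of_mem _ haA, rightCosetIn_eq_iff.1 ha.symm⟩, ?_⟩
  rintro _ ⟨⟨a', ha'A, rfl⟩, ha'y⟩
  rw [hA.injOn ha'A haA ((rightCosetIn_eq_iff.2 ha'y).symm.trans ha.symm)]

theorem isRightTransversalIn_inv_of_bijOn_leftCosetIn {A : Set D}
    (hA : BijOn (leftCosetIn H D) A univ) : IsRightTransversalIn H D⁻¹ ((↑) '' A)⁻¹ := by
  refine ⟨inv_subset_inv.2 (Subtype.coe_image_subset D A), fun y hy => ?_⟩
  obtain ⟨a, haA, ha⟩ := hA.surjOn (mem_univ (leftCosetIn H D ⟨y⁻¹, hy⟩))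
  refine ⟨(a : G)⁻¹,
    ⟨inv_mem_inv.2 (mem_image_of_mem _ haA), leftCosetIn_eq_iff.1 ha⟩, ?_⟩
  rintro t ⟨⟨a', ha'A, ha't⟩, hty⟩
  have ha' : leftCosetIn H D a' = leftCosetIn H D ⟨y⁻¹, hy⟩ :=
    leftCosetIn_eq_iff.2 (by rwa [ha't, inv_inv])
  rw [← inv_inv t, ← ha't, hA.injOn ha'A haA (ha'.trans ha.symm)]

end CosetsIn

section DoubleCoset

variable {G : Type*} [Group G] {H : Subgroup G} {x g g' : G}

theorem mem_doubleCoset_iff : g ∈ doubleCoset H x ↔ ∃ a ∈ H, ∃ b ∈ H, g = a * x * b :=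
  DoubleCoset.mem_doubleCoset

theorem leftCoset_subset_doubleCoset (hg : g ∈ doubleCoset H x) :
    g • (H : Set G) ⊆ doubleCoset H x := by
  obtain ⟨a, ha, b, hb, rfl⟩ := mem_doubleCoset_iff.1 hg
  intro z hz
  rw [mem_leftCoset_iff] at hz
  exact mem_doubleCoset_iff.2 ⟨a, ha, b * ((a * x * b)⁻¹ * z), H.mul_mem hb hz, by group⟩

theorem rightCoset_subset_doubleCoset (hg : g ∈ doubleCoset H x) :
    op g • (H : Set G) ⊆ doubleCoset H x := by
  obtain ⟨a, ha, b, hb, rfl⟩ := mem_doubleCoset_iff.1 hg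
  intro z hz
  rw [mem_rightCoset_iff] at hz
  exact mem_doubleCoset_iff.2 ⟨z * (a * x * b)⁻¹ * a, H.mul_mem hz ha, b, hb, by group⟩

theorem inv_doubleCoset : (doubleCoset H x)⁻¹ = doubleCoset H x⁻¹ := by
  ext g
  rw [mem_inv, mem_doubleCoset_iff, mem_doubleCoset_iff]
  constructor
  · rintro ⟨a, ha, b, hb, h⟩
    exact ⟨b⁻¹, inv_mem hb, a⁻¹, inv_mem ha, by rw [← inv_inv g, h]; group⟩
  · rintro ⟨a, ha, b, hb, rfl⟩
    exact ⟨b⁻¹, inv_mem hb, a⁻¹, inv_mem ha, by group⟩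

theorem disjoint_doubleCoset_of_ne (h : doubleCoset H x ≠ doubleCoset H g) :
    Disjoint (doubleCoset H x) (doubleCoset H g) :=
  not_not.1 (mt DoubleCoset.eq_of_not_disjoint h)

theorem natCard_leftCoset_inter_rightCoset (hg : g ∈ doubleCoset H x)
    (hg' : g' ∈ doubleCoset H x) :
    Nat.card ↥(g • (H : Set G) ∩ op g' • (H : Set G)) =
      Nat.card ↥(x • (H : Set G) ∩ op x • (H : Set G)) := by
  obtain ⟨a, ha, b, hb, rfl⟩ := mem_doubleCoset_iff.1 hg
  obtain ⟨a', ha', b', hb', rfl⟩ := mem_doubleCoset_iff.1 hg'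
  refine Nat.card_congr
    (((Equiv.mulLeft a⁻¹).trans (Equiv.mulRight b'⁻¹)).subtypeEquiv fun z => ?_)
  have hl : (a * x * b)⁻¹ * z = b⁻¹ * (x⁻¹ * (a⁻¹ * z * b'⁻¹)) * b' := by group
  have hr : z * (a' * x * b')⁻¹ = a * (a⁻¹ * z * b'⁻¹ * x⁻¹) * a'⁻¹ := by group
  simp only [mem_inter_iff, mem_leftCoset_iff, mem_rightCoset_iff, SetLike.mem_coe,
    Equiv.trans_apply, Equiv.coe_mulLeft, Equiv.coe_mulRight]
  rw [hl, hr, H.mul_mem_cancel_right hb', H.mul_mem_cancel_left (inv_mem hb),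
    H.mul_mem_cancel_right (inv_mem ha'), H.mul_mem_cancel_left ha]

end DoubleCoset

section Transversals

variable {G : Type*} [Group G] {H : Subgroup G}

theorem IsRightTransversalIn.existsUnique_union {K K' T T' : Set G}
    (hT : IsRightTransversalIn H K T) (hT' : T' ⊆ K')
    (hK' : ∀ g ∈ K', op g • (H : Set G) ⊆ K') (hKK' : Disjoint K K')
    {y : G} (hy : y ∈ K) : ∃! t, t ∈ T ∪ T' ∧ t * y⁻¹ ∈ H := by
  obtain ⟨t, ht, huniq⟩ := hT.2 y hy
  refine ⟨t, ⟨Or.inl ht.1, ht.2⟩, ?_⟩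
  rintro s ⟨hs | hs, hsy⟩
  · exact huniq s ⟨hs, hsy⟩
  · have hyK' : y ∈ K' := hK' s (hT' hs) (by simpa [mem_rightCoset_iff] using inv_mem hsy)
    exact absurd hyK' (hKK'.notMem_of_mem_left hy)

theorem IsRightTransversalIn.union_s18 {K K' T T' : Set G} (hT : IsRightTransversalIn H K T)
    (hT' : IsRightTransversalIn H K' T') (hK : ∀ g ∈ K, op g • (H : Set G) ⊆ K)
    (hK' : ∀ g ∈ K', op g • (H : Set G) ⊆ K') (hKK' : Disjoint K K') :
    IsRightTransversalIn H (K ∪ K') (T ∪ T') := by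
  refine ⟨union_subset_union hT.1 hT'.1, fun y hy => hy.elim ?_ ?_⟩
  · exact hT.existsUnique_union hT'.1 hK' hKK'
  · intro hy
    simpa only [union_comm] using hT'.existsUnique_union hT.1 hK hKK'.symm hy

theorem exists_pairwise_disjoint_transversals_doubleCoset [Finite G] (H : Subgroup G) (x : G)
    {b : ℕ} (hb : b ≤ Nat.card H) :
    ∃ A : Fin b → Set G, Pairwise (Disjoint on A) ∧ ∀ k,
      IsRightTransversalIn H (doubleCoset H x) (A k) ∧
        IsRightTransversalIn H (doubleCoset H x⁻¹) (A k)⁻¹ := by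
  set D := doubleCoset H x
  have : Nonempty D := ⟨⟨x, DoubleCoset.mem_doubleCoset_self H H x⟩⟩
  have hcells (p) : Nat.card {d // (leftCosetIn H D d, rightCosetIn H D d) = p} =
      Nat.card ↥(x • (H : Set G) ∩ op x • (H : Set G)) := by
    obtain ⟨i, j⟩ := p
    induction i using Quotient.ind with | _ a
    induction j using Quotient.ind with | _ a'
    exact (natCard_cosetsIn_fiber (fun _ => leftCoset_subset_doubleCoset) a a').trans
      (natCard_leftCoset_inter_rightCoset a.2 a'.2)
  obtain ⟨A, hdisj, hA⟩ := exists_pairwise_disjoint_bijOn_bijOn_of_card_fiber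
    (leftCosetIn H D) (rightCosetIn H D)
    (natCard_leftCosetIn_fiber fun _ => leftCoset_subset_doubleCoset)
    (natCard_rightCosetIn_fiber fun _ => rightCoset_subset_doubleCoset) hcells hb
  refine ⟨fun k => (↑) '' A k,
    fun k k' hkk' => (disjoint_image_iff Subtype.val_injective).2 (hdisj hkk'),
    fun k => ⟨isRightTransversalIn_of_bijOn_rightCosetIn (hA k).2, ?_⟩⟩
  rw [← inv_doubleCoset]
  exact isRightTransversalIn_inv_of_bijOn_leftCosetIn (hA k).1

theorem pairwise_disjoint_union_inv {ι : Type*} {A : ι → Set G} {K : Set G}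
    (hA : Pairwise (Disjoint on A)) (hAK : ∀ i, A i ⊆ K) (hK : Disjoint K K⁻¹) :
    Pairwise (Disjoint on fun i => A i ∪ (A i)⁻¹) := by
  intro i j hij
  simp only [onFun, disjoint_union_left, disjoint_union_right]
  exact ⟨⟨hA hij, (hK.mono (hAK j) (inv_subset_inv.2 (hAK i))).symm⟩,
    hK.mono (hAK i) (inv_subset_inv.2 (hAK j)), (hA hij).preimage Inv.inv⟩

end Transversals

theorem statement_18_general {G : Type*} [Group G] [Fintype G]
    (H : Subgroup G) (x : G)
    (h1 : doubleCoset H x ≠ doubleCoset H x⁻¹) :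
    ∀ b : ℕ, b ≤ Nat.card H →
      ∃ R : Fin b → Set G,
        (∀ i, IsRightTransversalIn H (doubleCoset H x ∪ doubleCoset H x⁻¹) (R i)) ∧
        (∀ i j, i ≠ j → Disjoint (R i) (R j)) ∧
        (⋃ i, R i) = (⋃ i, R i)⁻¹ := by
  intro b hb
  obtain ⟨A, hdisj, hA⟩ := exists_pairwise_disjoint_transversals_doubleCoset H x hb
  have hD : Disjoint (doubleCoset H x) (doubleCoset H x⁻¹) := disjoint_doubleCoset_of_ne h1
  refine ⟨fun k => A k ∪ (A k)⁻¹, fun k => ?_, ?_, ?_⟩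
  · exact (hA k).1.union_s18 (hA k).2 (fun _ => rightCoset_subset_doubleCoset)
      (fun _ => rightCoset_subset_doubleCoset) hD
  · exact pairwise_disjoint_union_inv hdisj (fun k => (hA k).1.1) (by rwa [inv_doubleCoset])
  · simp only [iUnion_inv, union_inv, inv_inv, union_comm]

theorem statement_18 {G : Type*} [Group G] [Fintype G] (p : ℕ) (hp : p.Prime)
    (hG : Nat.card G = 4 * p) (H : Subgroup G) (hH : H ≠ ⊥) (x : G)
    (h1 : doubleCoset H x ≠ doubleCoset H x⁻¹) :
    ∀ b : ℕ, b ≤ Nat.card H →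
      ∃ R : Fin b → Set G,
        (∀ i, IsRightTransversalIn H (doubleCoset H x ∪ doubleCoset H x⁻¹) (R i)) ∧
        (∀ i j, i ≠ j → Disjoint (R i) (R j)) ∧
        (⋃ i, R i) = (⋃ i, R i)⁻¹ :=
  statement_18_general H x h1
end
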